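/- arXiv:2201.04423 — 6 statements merged into one kernel-verified Lean document; each statement's English description precedes it below -/
import Mathlib

section
/- Let D be a totally ordered integral domain, S a Specker D-algebra with its f-algebra order, and s ∈ S with a, b ∈ D, a < b. Suppose s^⊥(c) = 0 for all c with a < c < b (i.e., no coefficient of the full orthogonal decomposition of s lies strictly between a and b). Then (s ∧ b) − (s ∧ a) = ((s − a) ∧ (b − a)) ∨ 0 = (b − a)·s^♭(b), where s^♭(b) = ⋁{s^⊥(c) : c ≥ b}. -/
/-
In a Specker algebra the f-algebra order is computed coordinatewise on any complete system of
orthogonal idempotents: writing `s = ∑ cᵢ eᵢ` and the scalars `a, b` as `∑ a eᵢ, ∑ b eᵢ`, all lattice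
operations act on the coefficients. Both identities therefore reduce to the scalar identities
`min c b - min c a = max (min (c - a) (b - a)) 0` (true whenever `a ≤ b`) and, when `c` does not lie
strictly between `a` and `b`, `min c b - min c a = if b ≤ c then b - a else 0`.
-/

open Finset

/-- A `D`-algebra `S` is torsion-free as a `D`-module. -/
def SpTorsionFree (D S : Type*) [CommRing D] [CommRing S] [Algebra D S] : Prop :=
  ∀ (a : D) (s : S), a • s = 0 → a = 0 ∨ s = 0

/-- `S` is generated as a `D`-algebra by its idempotents. -/
def SpIdemGenerated (D S : Type*) [CommRing D] [CommRing S] [Algebra D S] : Prop :=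
  Algebra.adjoin D {e : S | IsIdempotentElem e} = ⊤

/-- A Specker `D`-algebra: commutative unital, torsion-free, idempotent-generated. -/
def IsSpecker (D S : Type*) [CommRing D] [CommRing S] [Algebra D S] : Prop :=
  SpTorsionFree D S ∧ SpIdemGenerated D S

/-- The idempotents of `S`. -/
abbrev IdemOf (S : Type*) [Monoid S] := {e : S // IsIdempotentElem e}

/-- A full orthogonal decomposition of `s` with pairwise distinct coefficients and
nonzero pairwise orthogonal idempotents summing (= joining) to `1`. -/
def FullOrthDecomp (D S : Type*) [CommRing D] [CommRing S] [Algebra D S] {n : ℕ}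
    (a : Fin n → D) (e : Fin n → S) (s : S) : Prop :=
  Function.Injective a ∧ (∀ i, IsIdempotentElem (e i)) ∧ (∀ i, e i ≠ 0) ∧
    (∀ i j, i ≠ j → e i * e j = 0) ∧ (∑ i, e i = 1) ∧ s = ∑ i, a i • e i

/-- `s` has an orthogonal decomposition with nonnegative coefficients. -/
def OrthNonnegDecomp (D S : Type*) [CommRing D] [LinearOrder D] [IsStrictOrderedRing D] [CommRing S] [Algebra D S]
    (s : S) : Prop :=
  ∃ (n : ℕ) (a : Fin n → D) (e : Fin n → S),
    (∀ i, 0 ≤ a i) ∧ (∀ i, IsIdempotentElem (e i)) ∧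
    (∀ i j, i ≠ j → e i * e j = 0) ∧ s = ∑ i, a i • e i

/-- The canonical f-algebra order relation on a Specker algebra. -/
def specLE (D S : Type*) [CommRing D] [LinearOrder D] [IsStrictOrderedRing D] [CommRing S] [Algebra D S]
    (s t : S) : Prop :=
  OrthNonnegDecomp D S (t - s)

section Rel
variable {S : Type*}
def relUB (le : S → S → Prop) (A : Set S) (u : S) : Prop := ∀ x ∈ A, le x u
def relLB (le : S → S → Prop) (A : Set S) (u : S) : Prop := ∀ x ∈ A, le u x
def relIsLUB (le : S → S → Prop) (A : Set S) (u : S) : Prop :=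
  relUB le A u ∧ ∀ v, relUB le A v → le u v
def relIsGLB (le : S → S → Prop) (A : Set S) (u : S) : Prop :=
  relLB le A u ∧ ∀ v, relLB le A v → le v u
end Rel

/-- A function `D → B` belonging to Foster's boolean power `D[B]*`:
finitely valued, pairwise disjoint values, values join to `⊤`. -/
def IsBPFn (D B : Type*) [CommRing D] [BooleanAlgebra B] (f : D → B) : Prop :=
  (Set.range f).Finite ∧ (∀ a b : D, a ≠ b → f a ⊓ f b = ⊥) ∧ IsLUB (Set.range f) ⊤

/-- Foster's boolean power `D[B]*` as a set of functions. -/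
def DBStar (D B : Type*) [CommRing D] [BooleanAlgebra B] : Type _ :=
  {f : D → B // IsBPFn D B f}

/-- The boolean-power `D`-algebra operations on `D[B]*`, characterized via least upper bounds. -/
def FosterOps (D B : Type*) [CommRing D] [BooleanAlgebra B]
    [CommRing (DBStar D B)] [Algebra D (DBStar D B)] : Prop :=
  (∀ f g : DBStar D B, ∀ a : D,
      IsLUB {x : B | ∃ b c : D, b + c = a ∧ x = f.1 b ⊓ g.1 c} ((f + g).1 a)) ∧
  (∀ f g : DBStar D B, ∀ a : D,
      IsLUB {x : B | ∃ b c : D, b * c = a ∧ x = f.1 b ⊓ g.1 c} ((f * g).1 a)) ∧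
  (∀ (b : D) (f : DBStar D B) (a : D),
      IsLUB {x : B | ∃ c : D, b * c = a ∧ x = f.1 c} ((b • f).1 a))

/-- Decreasing step functions `D → B` determined by a chain `1 = e₀ > e₁ > ⋯ > eₙ > 0`
and thresholds `a₀ < a₁ < ⋯ < aₙ`. -/
def IsFlatFn (D B : Type*) [CommRing D] [LinearOrder D] [IsStrictOrderedRing D] [BooleanAlgebra B] (f : D → B) : Prop :=
  ∃ (n : ℕ) (a : Fin (n + 1) → D) (e : Fin (n + 1) → B),
    StrictMono a ∧ StrictAnti e ∧ e 0 = ⊤ ∧ ⊥ < e (Fin.last n) ∧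
    (∀ x : D, x ≤ a 0 → f x = ⊤) ∧
    (∀ (i : Fin n) (x : D), a i.castSucc < x → x ≤ a i.succ → f x = e i.succ) ∧
    (∀ x : D, a (Fin.last n) < x → f x = ⊥)

/-- The de Vries power `D[B]♭` as a set of decreasing step functions. -/
def DBFlat (D B : Type*) [CommRing D] [LinearOrder D] [IsStrictOrderedRing D] [BooleanAlgebra B] : Type _ :=
  {f : D → B // IsFlatFn D B f}

/-- A proximity on a torsion-free f-algebra over `D` (axioms (P1)–(P10)). -/
def IsProximity (D S : Type*) [CommRing D] [LinearOrder D] [IsStrictOrderedRing D] [CommRing S] [Algebra D S]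
    [Lattice S] (r : S → S → Prop) : Prop :=
  (r 0 0 ∧ r 1 1) ∧
  (∀ s t : S, r s t → s ≤ t) ∧
  (∀ s t u v : S, s ≤ t → r t u → u ≤ v → r s v) ∧
  (∀ s t u : S, r s t → r s u → r s (t ⊓ u)) ∧
  (∀ s t : S, r s t → r (-t) (-s)) ∧
  (∀ s t u v : S, r s t → r u v → r (s + u) (t + v)) ∧
  (∀ (s t : S) (a : D), 0 < a → r s t → r (a • s) (a • t)) ∧
  (∀ s t : S, (∃ a : D, 0 < a ∧ r (a • s) (a • t)) → r s t) ∧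
  (∀ s t u v : S, 0 ≤ s → 0 ≤ t → 0 ≤ u → 0 ≤ v → r s t → r u v → r (s * u) (t * v)) ∧
  (∀ s t : S, r s t → ∃ u, r s u ∧ r u t) ∧
  (∀ s : S, 0 < s → ∃ t, 0 < t ∧ r t s)

/-- A de Vries proximity on a boolean algebra. -/
def IsDeVriesProx (B : Type*) [BooleanAlgebra B] (p : B → B → Prop) : Prop :=
  (p ⊥ ⊥ ∧ p ⊤ ⊤) ∧
  (∀ a b : B, p a b → a ≤ b) ∧
  (∀ a b c d : B, a ≤ b → p b c → c ≤ d → p a d) ∧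
  (∀ a b c : B, p a b → p a c → p a (b ⊓ c)) ∧
  (∀ a b : B, p a b → p bᶜ aᶜ) ∧
  (∀ a b : B, p a b → ∃ c, p a c ∧ p c b) ∧
  (∀ a : B, a ≠ ⊥ → ∃ b, b ≠ ⊥ ∧ p b a)

/-- A Baer ring: the annihilator of every ideal is generated by an idempotent. -/
def IsBaer (S : Type*) [CommRing S] : Prop :=
  ∀ I : Ideal S, ∃ e : S, IsIdempotentElem e ∧
    ∀ r : S, (∀ s ∈ I, r * s = 0) ↔ ∃ x : S, r = x * e

/-- Proximity morphisms between proximity (Baer-)Specker algebras (axioms (M1)–(M7)). -/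
def IsProxMorphism (D S T : Type*) [CommRing D] [LinearOrder D] [IsStrictOrderedRing D]
    [CommRing S] [Algebra D S] [CommRing T] [Algebra D T] [Lattice S] [Lattice T]
    (rS : S → S → Prop) (rT : T → T → Prop) (α : S → T) : Prop :=
  α 0 = 0 ∧
  (∀ s t : S, α (s ⊓ t) = α s ⊓ α t) ∧
  (∀ s t : S, rS s t → rT (-(α (-s))) (α t)) ∧
  (∀ t : S, IsLUB {x : T | ∃ s : S, rS s t ∧ x = α s} (α t)) ∧
  (∀ (s : S) (a : D), α (s + algebraMap D S a) = α s + algebraMap D T a) ∧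
  (∀ (s : S) (a : D), 0 ≤ a → α (a • s) = a • α s) ∧
  (∀ (s : S) (a : D), α (s ⊔ algebraMap D S a) = α s ⊔ algebraMap D T a)

section Scalar

variable {α : Type*} [AddCommGroup α] [LinearOrder α]

lemma min_sub_min_eq_max_min_sub [IsOrderedAddMonoid α] {a b : α} (hab : a ≤ b) (c : α) :
    min c b - min c a = max (min (c - a) (b - a)) 0 := by
  rcases le_total c a with hca | hac
  · rw [min_eq_left (hca.trans hab), min_eq_left hca, sub_self,
      min_eq_left (sub_le_sub_right (hca.trans hab) a), max_eq_right (sub_nonpos.2 hca)]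
  rcases le_total c b with hcb | hbc
  · rw [min_eq_left hcb, min_eq_right hac, min_eq_left (sub_le_sub_right hcb a),
      max_eq_left (sub_nonneg.2 hac)]
  · rw [min_eq_right hbc, min_eq_right (hab.trans hbc), min_eq_right (sub_le_sub_right hbc a),
      max_eq_left (sub_nonneg.2 hab)]

lemma min_sub_min_eq_ite {a b c : α} (hab : a ≤ b) (hc : c ≤ a ∨ b ≤ c) :
    min c b - min c a = if b ≤ c then b - a else 0 := by
  rcases hc with hca | hbc
  · by_cases hbc : b ≤ c
    · rw [if_pos hbc, le_antisymm hab (hbc.trans hca), sub_self, sub_self]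
    · rw [if_neg hbc, min_eq_left (hca.trans hab), min_eq_left hca, sub_self]
  · rw [if_pos hbc, min_eq_right hbc, min_eq_right (hab.trans hbc)]

end Scalar

section OrthogonalDecomposition

variable {D S : Type*} [CommRing D] [CommRing S] [Algebra D S] {ι : Type*} [Fintype ι]

section Coordinates

variable {E : ι → S}

lemma sum_smul_sub_sum_smul (d e : ι → D) :
    ∑ i, d i • E i - ∑ i, e i • E i = ∑ i, (d i - e i) • E i := by
  simp only [← Finset.sum_sub_distrib, sub_smul]

lemma algebraMap_eq_sum_smul (hE : ∑ i, E i = 1) (x : D) :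
    algebraMap D S x = ∑ i, x • E i := by
  rw [Algebra.algebraMap_eq_smul_one, ← hE, Finset.smul_sum]

lemma OrthogonalIdempotents.sum_smul_mul (hE : OrthogonalIdempotents E) (d : ι → D) (i : ι) :
    (∑ j, d j • E j) * E i = d i • E i := by
  rw [Finset.sum_mul, Finset.sum_eq_single i (fun j _ hji => by
      rw [smul_mul_assoc, hE.ortho hji, smul_zero]) (by simp), smul_mul_assoc, (hE.idem i).eq]

end Coordinates

variable [LinearOrder D] [IsStrictOrderedRing D]

lemma orthNonnegDecomp_sum_smul {d : ι → D} {f : ι → S}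
    (hd : ∀ i, 0 ≤ d i) (hf : OrthogonalIdempotents f) :
    OrthNonnegDecomp D S (∑ i, d i • f i) := by
  let eqv := (Fintype.equivFin ι).symm
  exact ⟨Fintype.card ι, d ∘ eqv, f ∘ eqv, fun _ => hd _, fun _ => hf.idem _,
    fun _ _ h => hf.ortho (eqv.injective.ne h), (Equiv.sum_comp eqv _).symm⟩

lemma orthNonnegDecomp_sum_mul {x E : ι → S}
    (hx : ∀ i, OrthNonnegDecomp D S (x i)) (hE : OrthogonalIdempotents E) :
    OrthNonnegDecomp D S (∑ i, x i * E i) := by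
  choose m d f hd hf hfo hx using hx
  have hg : OrthogonalIdempotents fun p : Σ i, Fin (m i) => f p.1 p.2 * E p.1 := by
    refine ⟨fun p => (hf _ _).mul_of_commute (mul_comm _ _) (hE.idem _), ?_⟩
    rintro ⟨i, j⟩ ⟨i', j'⟩ hne
    by_cases hii : i = i'
    · subst hii
      have hjj : j ≠ j' := fun h => hne (h ▸ rfl)
      rw [mul_mul_mul_comm, hfo i j j' hjj, zero_mul]
    · rw [mul_mul_mul_comm, hE.ortho hii, mul_zero]
  convert orthNonnegDecomp_sum_smul (fun p => hd p.1 p.2) hg using 1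
  rw [← Finset.univ_sigma_univ, Finset.sum_sigma]
  simp only [hx, Finset.sum_mul, smul_mul_assoc]

section Lattice

variable {E : ι → S} [Lattice S] (hle : ∀ s t : S, s ≤ t ↔ OrthNonnegDecomp D S (t - s))
include hle

lemma neg_le_neg_iff_of_orthNonnegDecomp {s t : S} : -t ≤ -s ↔ s ≤ t := by
  rw [hle, hle, neg_sub_neg]

lemma neg_inf_of_orthNonnegDecomp (s t : S) : -(s ⊓ t) = -s ⊔ -t := by
  have hneg {x y : S} : -y ≤ -x ↔ x ≤ y := neg_le_neg_iff_of_orthNonnegDecomp hle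
  refine le_antisymm ?_ (sup_le (hneg.2 inf_le_left) (hneg.2 inf_le_right))
  rw [← hneg, neg_neg]
  exact le_inf (by rw [← hneg, neg_neg]; exact le_sup_left)
    (by rw [← hneg, neg_neg]; exact le_sup_right)

lemma sum_smul_le_sum_smul (hE : OrthogonalIdempotents E) {d e : ι → D} (h : ∀ i, d i ≤ e i) :
    ∑ i, d i • E i ≤ ∑ i, e i • E i := by
  rw [hle, sum_smul_sub_sum_smul]
  exact orthNonnegDecomp_sum_smul (fun i => sub_nonneg.2 (h i)) hE

lemma sum_smul_inf_sum_smul (hE : CompleteOrthogonalIdempotents E) (d e : ι → D) :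
    (∑ i, d i • E i) ⊓ (∑ i, e i • E i) = ∑ i, min (d i) (e i) • E i := by
  set u := ∑ i, d i • E i
  set v := ∑ i, e i • E i
  refine le_antisymm ?_ (le_inf
    (sum_smul_le_sum_smul hle hE.1 fun i => min_le_left _ _)
    (sum_smul_le_sum_smul hle hE.1 fun i => min_le_right _ _))
  -- on the idempotent `E i` the minimum is attained by `u` or by `v`
  have key : ∑ i, min (d i) (e i) • E i - u ⊓ v
      = ∑ i, (if d i ≤ e i then u - u ⊓ v else v - u ⊓ v) * E i := by
    conv_lhs => rw [← mul_one (u ⊓ v), ← hE.complete, Finset.mul_sum, ← Finset.sum_sub_distrib]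
    refine Finset.sum_congr rfl fun i _ => ?_
    split_ifs with h
    · rw [min_eq_left h, sub_mul, hE.1.sum_smul_mul]
    · rw [min_eq_right (le_of_not_ge h), sub_mul, hE.1.sum_smul_mul]
  rw [hle, key]
  refine orthNonnegDecomp_sum_mul (fun i => ?_) hE.1
  split_ifs
  · exact (hle _ _).1 inf_le_left
  · exact (hle _ _).1 inf_le_right

lemma sum_smul_sup_sum_smul (hE : CompleteOrthogonalIdempotents E) (d e : ι → D) :
    (∑ i, d i • E i) ⊔ (∑ i, e i • E i) = ∑ i, max (d i) (e i) • E i := by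
  have hneg (f : ι → D) : -∑ i, f i • E i = ∑ i, (-f i) • E i := by
    simp only [neg_smul, Finset.sum_neg_distrib]
  calc (∑ i, d i • E i) ⊔ (∑ i, e i • E i)
      = -((-∑ i, d i • E i) ⊓ (-∑ i, e i • E i)) := by
        rw [neg_inf_of_orthNonnegDecomp hle, neg_neg, neg_neg]
    _ = ∑ i, max (d i) (e i) • E i := by
        rw [hneg, hneg, sum_smul_inf_sum_smul hle hE, hneg]
        simp only [min_neg_neg, neg_neg]

end Lattice

end OrthogonalDecomposition

theorem statement12_general (D S : Type*) [CommRing D] [LinearOrder D] [IsStrictOrderedRing D] [CommRing S] [Algebra D S]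
    [Lattice S]
    (hle : ∀ s t : S, s ≤ t ↔ OrthNonnegDecomp D S (t - s))
    (s : S) {n : ℕ} (c : Fin n → D) (E : Fin n → S) (hdec : FullOrthDecomp D S c E s)
    (a b : D) (hab : a < b) (hgap : ∀ i, c i ≤ a ∨ b ≤ c i) :
    (s ⊓ algebraMap D S b) - (s ⊓ algebraMap D S a)
      = ((s - algebraMap D S a) ⊓ (algebraMap D S b - algebraMap D S a)) ⊔ 0 ∧
    (s ⊓ algebraMap D S b) - (s ⊓ algebraMap D S a)
      = (b - a) • ∑ i ∈ Finset.univ.filter (fun i => b ≤ c i), E i := by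
  obtain ⟨-, hEi, -, hEo, hE1, rfl⟩ := hdec
  have hE : CompleteOrthogonalIdempotents E := ⟨⟨hEi, fun _ _ => hEo _ _⟩, hE1⟩
  have hzero : (0 : S) = ∑ i, (0 : D) • E i := by simp
  simp only [algebraMap_eq_sum_smul hE1, sum_smul_inf_sum_smul hle hE, sum_smul_sub_sum_smul]
  rw [hzero, sum_smul_sup_sum_smul hle hE, Finset.sum_filter, Finset.smul_sum]
  constructor
  · simp only [min_sub_min_eq_max_min_sub hab.le]
  · simp only [min_sub_min_eq_ite hab.le (hgap _), smul_ite, smul_zero, ite_smul, zero_smul]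

/-- if no coefficient of the full orthogonal decomposition of `s` lies
strictly between `a` and `b`, then
`(s ∧ b) − (s ∧ a) = ((s − a) ∧ (b − a)) ∨ 0 = (b − a)·s♭(b)`. -/
theorem statement12 (D S : Type*) [CommRing D] [LinearOrder D] [IsStrictOrderedRing D] [CommRing S] [Algebra D S]
    (hS : IsSpecker D S) [Lattice S]
    (hle : ∀ s t : S, s ≤ t ↔ OrthNonnegDecomp D S (t - s))
    (s : S) {n : ℕ} (c : Fin n → D) (E : Fin n → S) (hdec : FullOrthDecomp D S c E s)
    (a b : D) (hab : a < b) (hgap : ∀ i, c i ≤ a ∨ b ≤ c i) :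
    (s ⊓ algebraMap D S b) - (s ⊓ algebraMap D S a)
      = ((s - algebraMap D S a) ⊓ (algebraMap D S b - algebraMap D S a)) ⊔ 0 ∧
    (s ⊓ algebraMap D S b) - (s ⊓ algebraMap D S a)
      = (b - a) • ∑ i ∈ Finset.univ.filter (fun i => b ≤ c i), E i :=
  statement12_general D S hle s c E hdec a b hab hgap
end

section
/- Let D be a totally ordered integral domain and S a Specker D-algebra. For any s, t ∈ S there exist a_0 < a_1 < ... < a_n in D with a_0·1 ≤ s, t ≤ a_n·1 such that s = a_0 + Σ_{i=1}^n (a_i − a_{i−1}) s^♭(a_i) and t = a_0 + Σ_{i=1}^n (a_i − a_{i−1}) t^♭(a_i); moreover if s, t ≥ 0 then one may take a_0 = 0. -/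
/-!
Take for `a₀ < ⋯ < aₙ` the sorted set of all coefficients of `s` and `t` together with `0`.
Since the idempotents of a full decomposition sum to `1`, `s - a₀ = ∑ⱼ (cⱼ - a₀) eⱼ`, and
telescoping each `cⱼ - a₀` along the chain gives the layer-cake formula; `s - a₀` and `aₙ - s`
have orthogonal decompositions with nonnegative coefficients, whence `a₀ ≤ s ≤ aₙ`. If `s ≥ 0`,
multiplying a nonnegative decomposition of `s` against each `eⱼ` and using torsion-freeness shows
`cⱼ ≥ 0`, so the least element of the chain is `0`.
-/

open Finset

theorem Fin.sum_filter_succ_le_sub {G : Type*} [AddCommGroup G] {n : ℕ} (a : Fin (n + 1) → G)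
    (k : Fin (n + 1)) :
    ∑ i ∈ univ.filter (fun i : Fin n => i.succ ≤ k), (a i.succ - a i.castSucc) = a k - a 0 := by
  induction k using Fin.induction with
  | zero => simp
  | succ k ih =>
    have hfilter : univ.filter (fun i : Fin n => i.succ ≤ k.succ) =
        insert k (univ.filter (fun i : Fin n => i.succ ≤ k.castSucc)) := by
      ext i
      simp only [mem_filter, mem_univ, true_and, mem_insert, Fin.succ_le_succ_iff,
        Fin.succ_le_castSucc_iff]
      exact le_iff_eq_or_lt
    rw [hfilter, sum_insert (by simp), ih]
    abel

theorem sum_sub_smul_sum_filter_le {D M ι : Type*} [Ring D] [LinearOrder D] [AddCommGroup M]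
    [Module D M] [Fintype ι] (c : ι → D) (e : ι → M) {n : ℕ} {a : Fin (n + 1) → D}
    (ha : StrictMono a) (hc : ∀ j, ∃ k, a k = c j) :
    ∑ i : Fin n, (a i.succ - a i.castSucc) • ∑ j ∈ univ.filter (fun j => a i.succ ≤ c j), e j =
      ∑ j, (c j - a 0) • e j := by
  have hcoeff : ∀ j, ∑ i ∈ univ.filter (fun i : Fin n => a i.succ ≤ c j),
      (a i.succ - a i.castSucc) = c j - a 0 := by
    intro j
    obtain ⟨k, hk⟩ := hc j
    simp only [← hk, ha.le_iff_le, Fin.sum_filter_succ_le_sub]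
  simp only [smul_sum, sum_filter]
  rw [sum_comm]
  refine sum_congr rfl fun j _ => ?_
  rw [← hcoeff j, sum_smul, sum_filter]
  simp only [smul_ite, smul_zero]

theorem Finset.exists_strictMono_fin_range_eq {α : Type*} [LinearOrder α] (A : Finset α)
    (hA : A.Nonempty) : ∃ (n : ℕ) (a : Fin (n + 1) → α), StrictMono a ∧ Set.range a = A := by
  have hcard : A.card = A.card - 1 + 1 := (Nat.sub_add_cancel hA.card_pos).symm
  exact ⟨_, A.orderEmbOfFin hcard, (A.orderEmbOfFin hcard).strictMono,
    A.range_orderEmbOfFin hcard⟩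

theorem sum_smul_mul_of_orthogonal {D S ι : Type*} [CommRing D] [CommRing S] [Algebra D S]
    [Fintype ι] (c : ι → D) {e : ι → S} (he : ∀ i, IsIdempotentElem (e i))
    (horth : ∀ i j, i ≠ j → e i * e j = 0) (j : ι) :
    (∑ i, c i • e i) * e j = c j • e j := by
  rw [sum_mul, sum_eq_single j (fun i _ hij => by rw [smul_mul_assoc, horth i j hij, smul_zero])
    (by simp), smul_mul_assoc, (he j).eq]

namespace FullOrthDecomp
variable {D S : Type*} [CommRing D] [CommRing S] [Algebra D S] {n : ℕ} {c : Fin n → D}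
  {e : Fin n → S} {s : S}

theorem sub_algebraMap_eq (h : FullOrthDecomp D S c e s) (b : D) :
    s - algebraMap D S b = ∑ i, (c i - b) • e i := by
  obtain ⟨-, -, -, -, hsum, rfl⟩ := h
  simp only [sub_smul, sum_sub_distrib, Algebra.algebraMap_eq_smul_one, ← hsum, smul_sum]

variable [LinearOrder D]

theorem orthNonnegDecomp_sub_algebraMap [IsStrictOrderedRing D] (h : FullOrthDecomp D S c e s)
    {b : D} (hb : ∀ i, b ≤ c i) : OrthNonnegDecomp D S (s - algebraMap D S b) :=
  ⟨n, fun i => c i - b, e, fun i => sub_nonneg.2 (hb i), h.2.1, h.2.2.2.1, h.sub_algebraMap_eq b⟩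

theorem orthNonnegDecomp_algebraMap_sub [IsStrictOrderedRing D] (h : FullOrthDecomp D S c e s)
    {b : D} (hb : ∀ i, c i ≤ b) : OrthNonnegDecomp D S (algebraMap D S b - s) := by
  refine ⟨n, fun i => b - c i, e, fun i => sub_nonneg.2 (hb i), h.2.1, h.2.2.2.1, ?_⟩
  rw [← neg_sub, h.sub_algebraMap_eq, ← sum_neg_distrib]
  simp only [← neg_smul, neg_sub]

theorem eq_algebraMap_add_sum_smul_sum_filter_le (h : FullOrthDecomp D S c e s) {m : ℕ}
    {a : Fin (m + 1) → D} (ha : StrictMono a) (hc : ∀ j, ∃ k, a k = c j) :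
    s = algebraMap D S (a 0) + ∑ i : Fin m, (a i.succ - a i.castSucc) •
      ∑ j ∈ univ.filter (fun j => a i.succ ≤ c j), e j := by
  rw [sum_sub_smul_sum_filter_le c e ha hc, ← h.sub_algebraMap_eq, add_sub_cancel]

theorem layerCake_of_strictMono [IsStrictOrderedRing D] [LE S]
    (hle : ∀ s t : S, s ≤ t ↔ OrthNonnegDecomp D S (t - s)) (h : FullOrthDecomp D S c e s)
    {m : ℕ} {a : Fin (m + 1) → D} (ha : StrictMono a) (hc : ∀ j, ∃ k, a k = c j) :
    algebraMap D S (a 0) ≤ s ∧ s ≤ algebraMap D S (a (Fin.last m)) ∧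
      s = algebraMap D S (a 0) + ∑ i : Fin m, (a i.succ - a i.castSucc) •
        ∑ j ∈ univ.filter (fun j => a i.succ ≤ c j), e j := by
  have hbounds : ∀ j, a 0 ≤ c j ∧ c j ≤ a (Fin.last m) := fun j => by
    obtain ⟨k, hk⟩ := hc j
    exact hk ▸ ⟨ha.monotone (Fin.zero_le k), ha.monotone (Fin.le_last k)⟩
  exact ⟨(hle _ _).2 (h.orthNonnegDecomp_sub_algebraMap fun j => (hbounds j).1),
    (hle _ _).2 (h.orthNonnegDecomp_algebraMap_sub fun j => (hbounds j).2),
    h.eq_algebraMap_add_sum_smul_sum_filter_le ha hc⟩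

theorem nonneg_of_orthNonnegDecomp [IsStrictOrderedRing D] (htf : SpTorsionFree D S)
    (h : FullOrthDecomp D S c e s) (hs : OrthNonnegDecomp D S s) (j : Fin n) : 0 ≤ c j := by
  obtain ⟨-, he, hne, horth, -, hsc⟩ := h
  obtain ⟨m, b, f, hb, hf, hforth, hsb⟩ := hs
  have hse : s * e j = c j • e j := hsc ▸ sum_smul_mul_of_orthogonal c he horth j
  have hsf : ∀ i, s * f i = b i • f i := fun i => hsb ▸ sum_smul_mul_of_orthogonal b hf hforth i
  by_contra! hcj
  -- `e j` meets no `f i`: on `f i * e j`, `s` acts both as `c j < 0` and as `b i ≥ 0`.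
  have hfe : ∀ i, f i * e j = 0 := by
    intro i
    have hdiff : (c j - b i) • (f i * e j) = 0 := by
      rw [sub_smul, ← mul_smul_comm, ← hse, ← smul_mul_assoc, ← hsf]
      ring
    exact (htf _ _ hdiff).resolve_left (sub_neg.2 (hcj.trans_le (hb i))).ne
  have hce : c j • e j = 0 := by
    rw [← hse, hsb, sum_mul]
    exact sum_eq_zero fun i _ => by rw [smul_mul_assoc, hfe, smul_zero]
  exact hne j ((htf _ _ hce).resolve_left hcj.ne)

end FullOrthDecomp

/-- any two elements of a Specker `D`-algebra admit compatible decreasing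
decompositions `s = a₀ + Σ (aᵢ − aᵢ₋₁)·s♭(aᵢ)`, `t = a₀ + Σ (aᵢ − aᵢ₋₁)·t♭(aᵢ)`, with
`a₀ ≤ s, t ≤ aₙ`; and if `s, t ≥ 0` one may take `a₀ = 0`. -/
theorem statement13 (D S : Type*) [CommRing D] [LinearOrder D] [IsStrictOrderedRing D] [CommRing S] [Algebra D S]
    (hS : IsSpecker D S) [Lattice S]
    (hle : ∀ s t : S, s ≤ t ↔ OrthNonnegDecomp D S (t - s))
    (s t : S) {ns nt : ℕ} (cs : Fin ns → D) (Es : Fin ns → S)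
    (ct : Fin nt → D) (Et : Fin nt → S)
    (hds : FullOrthDecomp D S cs Es s) (hdt : FullOrthDecomp D S ct Et t) :
    (∃ (n : ℕ) (a : Fin (n + 1) → D), StrictMono a ∧
      algebraMap D S (a 0) ≤ s ∧ s ≤ algebraMap D S (a (Fin.last n)) ∧
      algebraMap D S (a 0) ≤ t ∧ t ≤ algebraMap D S (a (Fin.last n)) ∧
      s = algebraMap D S (a 0) + ∑ i : Fin n, (a i.succ - a i.castSucc) •
            ∑ j ∈ Finset.univ.filter (fun j => a i.succ ≤ cs j), Es j ∧
      t = algebraMap D S (a 0) + ∑ i : Fin n, (a i.succ - a i.castSucc) •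
            ∑ j ∈ Finset.univ.filter (fun j => a i.succ ≤ ct j), Et j) ∧
    (0 ≤ s → 0 ≤ t →
      ∃ (n : ℕ) (a : Fin (n + 1) → D), a 0 = 0 ∧ StrictMono a ∧
        algebraMap D S (a 0) ≤ s ∧ s ≤ algebraMap D S (a (Fin.last n)) ∧
        algebraMap D S (a 0) ≤ t ∧ t ≤ algebraMap D S (a (Fin.last n)) ∧
        s = algebraMap D S (a 0) + ∑ i : Fin n, (a i.succ - a i.castSucc) •
              ∑ j ∈ Finset.univ.filter (fun j => a i.succ ≤ cs j), Es j ∧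
        t = algebraMap D S (a 0) + ∑ i : Fin n, (a i.succ - a i.castSucc) •
              ∑ j ∈ Finset.univ.filter (fun j => a i.succ ≤ ct j), Et j) := by
  classical
  set A : Finset D := insert 0 (univ.image cs ∪ univ.image ct)
  obtain ⟨n, a, ha, hrange⟩ := A.exists_strictMono_fin_range_eq (insert_nonempty _ _)
  have hA : ∀ x, x ∈ A ↔ ∃ k, a k = x := fun x => by rw [← mem_coe, ← hrange, Set.mem_range]
  obtain ⟨hs_lb, hs_ub, hs_eq⟩ := hds.layerCake_of_strictMono hle ha fun j => (hA _).1 (by simp [A])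
  obtain ⟨ht_lb, ht_ub, ht_eq⟩ := hdt.layerCake_of_strictMono hle ha fun j => (hA _).1 (by simp [A])
  refine ⟨⟨n, a, ha, hs_lb, hs_ub, ht_lb, ht_ub, hs_eq, ht_eq⟩,
    fun hs0 ht0 => ⟨n, a, ?_, ha, hs_lb, hs_ub, ht_lb, ht_ub, hs_eq, ht_eq⟩⟩
  have hA_nonneg : ∀ x ∈ A, 0 ≤ x := by
    simp only [A, mem_insert, mem_union, mem_image, mem_univ, true_and]
    rintro x (rfl | ⟨j, rfl⟩ | ⟨j, rfl⟩)
    · exact le_rfl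
    · exact hds.nonneg_of_orthNonnegDecomp hS.1 (sub_zero s ▸ (hle 0 s).1 hs0) j
    · exact hdt.nonneg_of_orthNonnegDecomp hS.1 (sub_zero t ▸ (hle 0 t).1 ht0) j
  obtain ⟨k, hk⟩ := (hA 0).1 (mem_insert_self _ _)
  exact le_antisymm (hk ▸ ha.monotone (Fin.zero_le k)) (hA_nonneg _ ((hA _).2 ⟨0, rfl⟩))
end

section
/- Let D be a totally ordered integral domain and (S, ◁) a proximity Specker D-algebra. Then the restriction of ◁ to Id(S) is a de Vries proximity on the boolean algebra Id(S). -/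
open Finset

/-!
Idempotents are nonnegative, and for idempotents `e ≤ f ↔ e f = e` (multiply `e ≤ f` by `1 - f`),
so the de Vries axioms other than interpolation and density restrict directly from (P1)–(P8).
Both remaining axioms rest on one observation: if `0 ≤ u ≤ 1` and `u ◁ g` with `g` idempotent,
let `h` be the support of `u` and `m > 0` a lower bound of the nonzero coefficients of `u`.
Then `u ≤ h` and `m h ≤ u`, so `m h ◁ g ⊓ m ≤ m g` by (P3), (P4), (P7), and (P7) gives `h ◁ g`.
For interpolation apply this to `1 - s ◁ 1 - e`, where `e ◁ s ◁ f` comes from (P9), and take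
`1 - h`; for density apply it to `t ◁ e` with `0 < t` from (P10).
-/

section

variable {D S : Type*} [CommRing D] [LinearOrder D] [IsStrictOrderedRing D] [CommRing S]
  [Algebra D S]

namespace OrthNonnegDecomp

theorem of_isIdempotentElem {e : S} (he : IsIdempotentElem e) : OrthNonnegDecomp D S e :=
  ⟨1, fun _ => 1, fun _ => e, fun _ => zero_le_one, fun _ => he,
    fun i j hij => absurd (Subsingleton.elim i j) hij, by simp⟩

theorem mul_isIdempotentElem {x k : S} (hx : OrthNonnegDecomp D S x)
    (hk : IsIdempotentElem k) : OrthNonnegDecomp D S (x * k) := by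
  obtain ⟨n, a, e, ha, hi, ho, rfl⟩ := hx
  refine ⟨n, a, fun i => e i * k, ha, fun i => (hi i).mul hk, fun i j hij => ?_, ?_⟩
  · rw [mul_mul_mul_comm, ho i j hij, zero_mul]
  · simp only [sum_mul, smul_mul_assoc]

theorem exists_support {u : S} (hu : OrthNonnegDecomp D S u) :
    ∃ (h : S) (m : D), IsIdempotentElem h ∧ 0 < m ∧
      OrthNonnegDecomp D S (u - m • h) ∧ u * h = u := by
  obtain ⟨n, a, e, ha, hi, ho, rfl⟩ := hu
  have he : OrthogonalIdempotents e := ⟨hi, fun i j => ho i j⟩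
  set J := univ.filter (fun i => 0 < a i)
  set m := (insert 1 (J.image a)).min' (insert_nonempty _ _)
  have hm0 : 0 < m := by
    refine (lt_min'_iff _ _).2 fun x hx => ?_
    obtain rfl | ⟨i, hi, rfl⟩ := by simpa using hx
    · exact zero_lt_one
    · exact (mem_filter.1 hi).2
  have hmJ : ∀ i ∈ J, m ≤ a i := fun i hi =>
    min'_le _ _ (mem_insert_of_mem (mem_image_of_mem a hi))
  refine ⟨∑ i ∈ J, e i, m, he.isIdempotentElem_sum, hm0,
    ⟨n, fun i => if i ∈ J then a i - m else a i, e, fun i => ?_, hi, ho, ?_⟩, ?_⟩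
  · dsimp only
    split_ifs with hiJ
    · exact sub_nonneg.2 (hmJ i hiJ)
    · exact ha i
  · have hterm : ∀ i, (if i ∈ J then a i - m else a i) • e i
        = a i • e i - if i ∈ J then m • e i else 0 := by
      intro i; split_ifs <;> simp [sub_smul]
    simp_rw [hterm, sum_sub_distrib, sum_ite_mem, univ_inter, smul_sum]
  · simp only [sum_mul, smul_mul_assoc]
    refine sum_congr rfl fun i _ => ?_
    by_cases hiJ : i ∈ J
    · rw [he.mul_sum_of_mem hiJ]
    · rw [he.mul_sum_of_notMem hiJ, smul_zero,
        le_antisymm (not_lt.1 fun h => hiJ (mem_filter.2 ⟨mem_univ i, h⟩)) (ha i), zero_smul]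

end OrthNonnegDecomp

section OrthDecompOrder

variable [Lattice S] (hle : ∀ s t : S, s ≤ t ↔ OrthNonnegDecomp D S (t - s))
include hle

theorem isOrderedAddMonoid_of_le_iff : IsOrderedAddMonoid S where
  add_le_add_left a b hab c := by rwa [hle, add_sub_add_right_eq_sub, ← hle]

theorem nonneg_iff_orthNonnegDecomp {x : S} : 0 ≤ x ↔ OrthNonnegDecomp D S x := by
  simpa using hle 0 x

theorem nonneg_of_isIdempotentElem {e : S} (he : IsIdempotentElem e) : 0 ≤ e :=
  (nonneg_iff_orthNonnegDecomp hle).2 (.of_isIdempotentElem he)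

theorem le_one_of_isIdempotentElem {e : S} (he : IsIdempotentElem e) : e ≤ 1 :=
  (hle e 1).2 (.of_isIdempotentElem he.one_sub)

theorem mul_le_mul_of_isIdempotentElem {x y k : S} (hxy : x ≤ y) (hk : IsIdempotentElem k) :
    x * k ≤ y * k := by
  rw [hle, ← sub_mul]
  exact ((hle x y).1 hxy).mul_isIdempotentElem hk

theorem isIdempotentElem_le_iff {e f : S} (he : IsIdempotentElem e) (hf : IsIdempotentElem f) :
    e ≤ f ↔ e * f = e := by
  constructor
  · intro hef
    have hle0 : e * (1 - f) ≤ 0 := by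
      simpa [mul_sub, hf.eq] using mul_le_mul_of_isIdempotentElem hle hef hf.one_sub
    have h0le : 0 ≤ e * (1 - f) := nonneg_of_isIdempotentElem hle (he.mul hf.one_sub)
    linear_combination -(le_antisymm hle0 h0le)
  · intro hef
    rw [hle, show f - e = (1 - e) * f by linear_combination hef]
    exact .of_isIdempotentElem (he.one_sub.mul hf)

theorem inf_smul_one_le_smul {g : S} (hg : IsIdempotentElem g) (m : D) :
    g ⊓ m • (1 : S) ≤ m • g := by
  have := isOrderedAddMonoid_of_le_iff hle
  set z := g ⊓ m • (1 : S)
  have hzg : z * g ≤ m • g := by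
    simpa using mul_le_mul_of_isIdempotentElem hle (inf_le_right : z ≤ m • 1) hg
  have hzg' : z * (1 - g) ≤ 0 := by
    simpa [mul_sub, hg.eq] using
      mul_le_mul_of_isIdempotentElem hle (inf_le_left : z ≤ g) hg.one_sub
  calc z = z * g + z * (1 - g) := by ring
    _ ≤ m • g := add_le_of_le_of_nonpos hzg hzg'

theorem exists_isIdempotentElem_smul_le_le {u : S} (hu0 : 0 ≤ u) (hu1 : u ≤ 1) :
    ∃ (h : S) (m : D), IsIdempotentElem h ∧ 0 < m ∧ m • h ≤ u ∧ u ≤ h := by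
  obtain ⟨h, m, hh, hm, hmh, huh⟩ := ((nonneg_iff_orthNonnegDecomp hle).1 hu0).exists_support
  refine ⟨h, m, hh, hm, (hle _ _).2 hmh, ?_⟩
  simpa [huh] using mul_le_mul_of_isIdempotentElem hle hu1 hh

end OrthDecompOrder

namespace IsProximity

variable [Lattice S] {r : S → S → Prop}

theorem rel_zero_zero (hr : IsProximity D S r) : r 0 0 := hr.1.1

theorem rel_one_one (hr : IsProximity D S r) : r 1 1 := hr.1.2

theorem le_of_rel (hr : IsProximity D S r) {s t : S} (h : r s t) : s ≤ t := hr.2.1 s t h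

theorem rel_of_le_of_rel_of_le (hr : IsProximity D S r) {s t u v : S} (hst : s ≤ t)
    (htu : r t u) (huv : u ≤ v) : r s v :=
  hr.2.2.1 s t u v hst htu huv

theorem rel_inf (hr : IsProximity D S r) {s t u : S} (ht : r s t) (hu : r s u) :
    r s (t ⊓ u) :=
  hr.2.2.2.1 s t u ht hu

theorem neg_rel_neg (hr : IsProximity D S r) {s t : S} (h : r s t) : r (-t) (-s) :=
  hr.2.2.2.2.1 s t h

theorem add_rel_add (hr : IsProximity D S r) {s t u v : S} (hst : r s t) (huv : r u v) :
    r (s + u) (t + v) :=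
  hr.2.2.2.2.2.1 s t u v hst huv

theorem smul_rel_smul (hr : IsProximity D S r) {s t : S} {a : D} (ha : 0 < a) (h : r s t) :
    r (a • s) (a • t) :=
  hr.2.2.2.2.2.2.1 s t a ha h

theorem rel_of_smul_rel (hr : IsProximity D S r) {s t : S} {a : D} (ha : 0 < a)
    (h : r (a • s) (a • t)) : r s t :=
  hr.2.2.2.2.2.2.2.1 s t ⟨a, ha, h⟩

theorem mul_rel_mul (hr : IsProximity D S r) {s t u v : S} (hs : 0 ≤ s) (ht : 0 ≤ t)
    (hu : 0 ≤ u) (hv : 0 ≤ v) (hst : r s t) (huv : r u v) : r (s * u) (t * v) :=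
  hr.2.2.2.2.2.2.2.2.1 s t u v hs ht hu hv hst huv

theorem exists_rel_rel (hr : IsProximity D S r) {s t : S} (h : r s t) : ∃ u, r s u ∧ r u t :=
  hr.2.2.2.2.2.2.2.2.2.1 s t h

theorem exists_pos_rel (hr : IsProximity D S r) {s : S} (hs : 0 < s) : ∃ t, 0 < t ∧ r t s :=
  hr.2.2.2.2.2.2.2.2.2.2 s hs

theorem one_sub_rel_one_sub (hr : IsProximity D S r) {s t : S} (h : r s t) :
    r (1 - t) (1 - s) := by
  simpa [sub_eq_add_neg] using hr.add_rel_add hr.rel_one_one (hr.neg_rel_neg h)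

section

variable (hr : IsProximity D S r) (hle : ∀ s t : S, s ≤ t ↔ OrthNonnegDecomp D S (t - s))
include hr hle

theorem exists_isIdempotentElem_le_rel {u g : S} (hu0 : 0 ≤ u) (hu1 : u ≤ 1)
    (hg : IsIdempotentElem g) (hug : r u g) : ∃ h, IsIdempotentElem h ∧ u ≤ h ∧ r h g := by
  obtain ⟨h, m, hh, hm, hmh, huh⟩ := exists_isIdempotentElem_smul_le_le hle hu0 hu1
  have hmhg : r (m • h) g := hr.rel_of_le_of_rel_of_le hmh hug le_rfl
  have hmh1 : r (m • h) (m • 1) :=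
    hr.smul_rel_smul hm
      (hr.rel_of_le_of_rel_of_le (le_one_of_isIdempotentElem hle hh) hr.rel_one_one le_rfl)
  refine ⟨h, hh, huh, hr.rel_of_smul_rel hm ?_⟩
  exact hr.rel_of_le_of_rel_of_le le_rfl (hr.rel_inf hmhg hmh1) (inf_smul_one_le_smul hle hg m)

theorem exists_isIdempotentElem_rel_rel {e f : S} (he : IsIdempotentElem e)
    (hf : IsIdempotentElem f) (hef : r e f) : ∃ c, IsIdempotentElem c ∧ r e c ∧ r c f := by
  have := isOrderedAddMonoid_of_le_iff hle
  obtain ⟨s, hes, hsf⟩ := hr.exists_rel_rel hef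
  have hs0 : 0 ≤ s := (nonneg_of_isIdempotentElem hle he).trans (hr.le_of_rel hes)
  have hs1 : s ≤ 1 := (hr.le_of_rel hsf).trans (le_one_of_isIdempotentElem hle hf)
  obtain ⟨h, hh, hsh, hhe⟩ := hr.exists_isIdempotentElem_le_rel hle (sub_nonneg.2 hs1)
    (sub_le_self 1 hs0) he.one_sub (hr.one_sub_rel_one_sub hes)
  refine ⟨1 - h, hh.one_sub, by simpa using hr.one_sub_rel_one_sub hhe, ?_⟩
  exact hr.rel_of_le_of_rel_of_le (sub_le_comm.1 hsh) hsf le_rfl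

theorem exists_isIdempotentElem_ne_zero_rel {e : S} (he : IsIdempotentElem e) (he0 : e ≠ 0) :
    ∃ b, IsIdempotentElem b ∧ b ≠ 0 ∧ r b e := by
  obtain ⟨t, ht0, hte⟩ := hr.exists_pos_rel ((nonneg_of_isIdempotentElem hle he).lt_of_ne' he0)
  obtain ⟨h, hh, hth, hhe⟩ := hr.exists_isIdempotentElem_le_rel hle ht0.le
    ((hr.le_of_rel hte).trans (le_one_of_isIdempotentElem hle he)) he hte
  exact ⟨h, hh, (ht0.trans_le hth).ne', hhe⟩

end

end IsProximity

end

/-- Boolean operations on idempotents are expressed ring-theoretically: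
`e ∧ f = ef`, `¬e = 1 − e`, `e ≤ f ↔ ef = e`. -/
theorem statement14_general (D S : Type*) [CommRing D] [LinearOrder D] [IsStrictOrderedRing D] [CommRing S] [Algebra D S]
    [Lattice S]
    (hle : ∀ s t : S, s ≤ t ↔ OrthNonnegDecomp D S (t - s))
    (r : S → S → Prop) (hr : IsProximity D S r) :
    (r 0 0 ∧ r 1 1) ∧
    (∀ e f : S, IsIdempotentElem e → IsIdempotentElem f → r e f → e * f = e) ∧
    (∀ a b c d : S, IsIdempotentElem a → IsIdempotentElem b → IsIdempotentElem c →
      IsIdempotentElem d → a * b = a → r b c → c * d = c → r a d) ∧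
    (∀ a b c : S, IsIdempotentElem a → IsIdempotentElem b → IsIdempotentElem c →
      r a b → r a c → r a (b * c)) ∧
    (∀ a b : S, IsIdempotentElem a → IsIdempotentElem b → r a b → r (1 - b) (1 - a)) ∧
    (∀ a b : S, IsIdempotentElem a → IsIdempotentElem b → r a b →
      ∃ c : S, IsIdempotentElem c ∧ r a c ∧ r c b) ∧
    (∀ a : S, IsIdempotentElem a → a ≠ 0 →
      ∃ b : S, IsIdempotentElem b ∧ b ≠ 0 ∧ r b a) := by
  have le_iff_mul_eq := fun {e f : S} => isIdempotentElem_le_iff (e := e) (f := f) hle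
  have nonneg := fun {e : S} => nonneg_of_isIdempotentElem (e := e) hle
  refine ⟨⟨hr.rel_zero_zero, hr.rel_one_one⟩, ?_, ?_, ?_, ?_, ?_, ?_⟩
  · exact fun e f he hf hef => (le_iff_mul_eq he hf).1 (hr.le_of_rel hef)
  · intro a b c d ha hb hc hd hab hbc hcd
    exact hr.rel_of_le_of_rel_of_le ((le_iff_mul_eq ha hb).2 hab) hbc
      ((le_iff_mul_eq hc hd).2 hcd)
  · intro a b c ha hb hc hab hac
    simpa [ha.eq] using hr.mul_rel_mul (nonneg ha) (nonneg hb) (nonneg ha) (nonneg hc) hab hac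
  · exact fun a b _ _ hab => hr.one_sub_rel_one_sub hab
  · exact fun a b ha hb hab => hr.exists_isIdempotentElem_rel_rel hle ha hb hab
  · exact fun a ha ha0 => hr.exists_isIdempotentElem_ne_zero_rel hle ha ha0

/-- a proximity on a proximity Specker `D`-algebra restricts to a de Vries
proximity on the boolean algebra of idempotents (boolean operations expressed ring
theoretically: `e ∧ f = ef`, `¬e = 1 − e`, `e ≤ f ↔ ef = e`). -/
theorem statement14 (D S : Type*) [CommRing D] [LinearOrder D] [IsStrictOrderedRing D] [CommRing S] [Algebra D S]
    (hS : IsSpecker D S) [Lattice S]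
    (hle : ∀ s t : S, s ≤ t ↔ OrthNonnegDecomp D S (t - s))
    (r : S → S → Prop) (hr : IsProximity D S r) :
    (r 0 0 ∧ r 1 1) ∧
    (∀ e f : S, IsIdempotentElem e → IsIdempotentElem f → r e f → e * f = e) ∧
    (∀ a b c d : S, IsIdempotentElem a → IsIdempotentElem b → IsIdempotentElem c →
      IsIdempotentElem d → a * b = a → r b c → c * d = c → r a d) ∧
    (∀ a b c : S, IsIdempotentElem a → IsIdempotentElem b → IsIdempotentElem c →
      r a b → r a c → r a (b * c)) ∧
    (∀ a b : S, IsIdempotentElem a → IsIdempotentElem b → r a b → r (1 - b) (1 - a)) ∧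
    (∀ a b : S, IsIdempotentElem a → IsIdempotentElem b → r a b →
      ∃ c : S, IsIdempotentElem c ∧ r a c ∧ r c b) ∧
    (∀ a : S, IsIdempotentElem a → a ≠ 0 →
      ∃ b : S, IsIdempotentElem b ∧ b ≠ 0 ∧ r b a) :=
  statement14_general D S hle r hr
end

section
/- Let D be a totally ordered integral domain, B a boolean algebra, and ≺ a de Vries proximity on B. Define ≺^♭ on D[B]^♭ by f ≺^♭ g iff f(b) ≺ g(b) for all b ∈ D. Then ≺^♭ is a proximity on the Specker D-algebra D[B]^♭, and it is the unique proximity on D[B]^♭ whose restriction to the idempotents corresponds to ≺ under the canonical boolean isomorphism B ≅ Id(D[B]^♭). -/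
open Finset

/-!
Every flat function is a step function: it is `⊤` below a finite set `T` of breakpoints, constant
on each cell cut out by `T`, and `⊥` above `T`; conversely every antitone step function is flat.
Through the pointwise description of the operations, each axiom for `≺♭` then reduces to the
corresponding de Vries axiom: the suprema describing `f + g`, `a • f` and `f * g` range over finite
sets because flat functions have finite range, and interpolants for `f ≺♭ g` are chosen at the
breakpoints. For negation, `(-f)(x)` is the complement of the right limit of `f` at `-x`.

For uniqueness let `≺'` be a proximity that agrees with `≺♭` on idempotents. If `f ≺' g`, clamping
`f` and `g` to a window `(c, b]` on which `g` is constant and rescaling gives `(f b)♭ ≺' (g b)♭`,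
hence `f b ≺ g b`. If `f ≺♭ g`, take common breakpoints `t₀ < ⋯ < tₙ`; peeling off the last step,
`f = f|≤tₙ₋₁ + (tₙ - tₙ₋₁) • (f tₙ)♭`, so induction on the breakpoints with (P6) and (P7) gives
`f ≺' g`.
-/

namespace IsDeVriesProx

variable {B : Type*} [BooleanAlgebra B] {p : B → B → Prop}

theorem le (hp : IsDeVriesProx B p) {a b : B} (h : p a b) : a ≤ b := hp.2.1 a b h

theorem mono (hp : IsDeVriesProx B p) {a b c d : B} (hab : a ≤ b) (hbc : p b c) (hcd : c ≤ d) :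
    p a d :=
  hp.2.2.1 a b c d hab hbc hcd

theorem bot_left (hp : IsDeVriesProx B p) (a : B) : p ⊥ a := hp.mono le_rfl hp.1.1 bot_le

theorem top_right (hp : IsDeVriesProx B p) (a : B) : p a ⊤ := hp.mono le_top hp.1.2 le_rfl

theorem inf_right (hp : IsDeVriesProx B p) {a b c : B} (hb : p a b) (hc : p a c) : p a (b ⊓ c) :=
  hp.2.2.2.1 a b c hb hc

theorem compl (hp : IsDeVriesProx B p) {a b : B} (h : p a b) : p bᶜ aᶜ := hp.2.2.2.2.1 a b h

theorem exists_between (hp : IsDeVriesProx B p) {a b : B} (h : p a b) : ∃ c, p a c ∧ p c b :=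
  hp.2.2.2.2.2.1 a b h

theorem exists_ne_bot (hp : IsDeVriesProx B p) {a : B} (h : a ≠ ⊥) :
    ∃ b, b ≠ ⊥ ∧ p b a :=
  hp.2.2.2.2.2.2 a h

theorem sup_left (hp : IsDeVriesProx B p) {a b c : B} (ha : p a c) (hb : p b c) :
    p (a ⊔ b) c := by
  simpa using hp.compl (hp.inf_right (hp.compl ha) (hp.compl hb))

theorem inf_inf (hp : IsDeVriesProx B p) {a b c d : B} (hab : p a b) (hcd : p c d) :
    p (a ⊓ c) (b ⊓ d) :=
  hp.inf_right (hp.mono inf_le_left hab le_rfl) (hp.mono inf_le_right hcd le_rfl)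

theorem finset_sup_left (hp : IsDeVriesProx B p) {ι : Type*} {s : Finset ι} {f : ι → B} {c : B}
    (h : ∀ i ∈ s, p (f i) c) : p (s.sup f) c :=
  Finset.sup_induction (p := (p · c)) (hp.bot_left c) (fun _ ha _ hb => hp.sup_left ha hb) h

theorem of_isLUB (hp : IsDeVriesProx B p) {S : Set B} {z c : B} (hz : IsLUB S z) (hS : S.Finite)
    (h : ∀ s ∈ S, p s c) : p z c := by
  have hsup : IsLUB S (hS.toFinset.sup id) := by
    simpa using (Finset.isLUB_sup_id (s := hS.toFinset))
  rw [hz.unique hsup]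
  exact hp.finset_sup_left fun s hs => h s (hS.mem_toFinset.1 hs)

end IsDeVriesProx

namespace IsProximity

variable {D S : Type*} [CommRing D] [LinearOrder D] [IsStrictOrderedRing D] [CommRing S]
  [Algebra D S] [Lattice S] {q : S → S → Prop} {s t u v : S}

theorem mono (hq : IsProximity D S q) (hst : s ≤ t) (htu : q t u) (huv : u ≤ v) : q s v :=
  hq.2.2.1 s t u v hst htu huv

theorem inf_right (hq : IsProximity D S q) (ht : q s t) (hu : q s u) : q s (t ⊓ u) :=
  hq.2.2.2.1 s t u ht hu

theorem neg (hq : IsProximity D S q) (h : q s t) : q (-t) (-s) := hq.2.2.2.2.1 s t h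

theorem add (hq : IsProximity D S q) (hst : q s t) (huv : q u v) : q (s + u) (t + v) :=
  hq.2.2.2.2.2.1 s t u v hst huv

theorem smul (hq : IsProximity D S q) {a : D} (ha : 0 < a) (h : q s t) : q (a • s) (a • t) :=
  hq.2.2.2.2.2.2.1 s t a ha h

theorem of_smul (hq : IsProximity D S q) {a : D} (ha : 0 < a) (h : q (a • s) (a • t)) : q s t :=
  hq.2.2.2.2.2.2.2.1 s t ⟨a, ha, h⟩

theorem smul_one (hq : IsProximity D S q) (a : D) : q (a • 1 : S) (a • 1) := by
  rcases lt_trichotomy a 0 with ha | rfl | ha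
  · simpa using hq.neg (hq.smul (neg_pos.2 ha) hq.1.2)
  · simpa using hq.1.1
  · exact hq.smul ha hq.1.2

theorem sup_left (hq : IsProximity D S q) (hneg : ∀ s u : S, -(s ⊔ u) = -s ⊓ -u)
    (hs : q s v) (hu : q u v) : q (s ⊔ u) v := by
  have := hq.inf_right (hq.neg hs) (hq.neg hu)
  rw [← hneg] at this
  simpa using hq.neg this

theorem sup_smul_one (hq : IsProximity D S q) (hneg : ∀ s u : S, -(s ⊔ u) = -s ⊓ -u)
    (h : q s t) (a : D) : q (s ⊔ a • 1) (t ⊔ a • 1) :=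
  hq.sup_left hneg (hq.mono le_rfl h le_sup_left) (hq.mono le_rfl (hq.smul_one a) le_sup_right)

theorem inf_smul_one (hq : IsProximity D S q) (h : q s t) (a : D) :
    q (s ⊓ a • 1) (t ⊓ a • 1) :=
  hq.inf_right (hq.mono inf_le_left h le_rfl) (hq.mono inf_le_right (hq.smul_one a) le_rfl)

end IsProximity

section Gaps

variable {α : Type*} [LinearOrder α]

theorem Finset.exists_gt_forall_notMem_Ioo [NoMaxOrder α] (T : Finset α) (x : α) :
    ∃ c, x < c ∧ ∀ t ∈ T, t ∉ Set.Ioo x c := by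
  classical
  obtain ⟨y, hxy⟩ := exists_gt x
  set U := insert y (T.filter (x < ·))
  refine ⟨U.min' (insert_nonempty _ _), (U.lt_min'_iff _).2 ?_, ?_⟩
  · intro z hz
    rcases mem_insert.1 hz with rfl | hz
    exacts [hxy, (mem_filter.1 hz).2]
  · rintro t ht ⟨hxt, htc⟩
    exact htc.not_ge (U.min'_le t (by simp [U, ht, hxt]))

theorem Finset.exists_lt_forall_notMem_Ioo [NoMinOrder α] (T : Finset α) (x : α) :
    ∃ c, c < x ∧ ∀ t ∈ T, t ∉ Set.Ioo c x := by
  classical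
  obtain ⟨y, hyx⟩ := exists_lt x
  set U := insert y (T.filter (· < x))
  refine ⟨U.max' (insert_nonempty _ _), (U.max'_lt_iff _).2 ?_, ?_⟩
  · intro z hz
    rcases mem_insert.1 hz with rfl | hz
    exacts [hyx, (mem_filter.1 hz).2]
  · rintro t ht ⟨hct, htx⟩
    exact hct.not_ge (U.le_max' t (by simp [U, ht, htx]))

end Gaps

structure IsStepFnOn {α B : Type*} [LinearOrder α] [Lattice B] [BoundedOrder B]
    (T : Finset α) (f : α → B) : Prop where
  eq_top : ∀ x, (∀ t ∈ T, x ≤ t) → f x = ⊤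
  eq_of_forall_notMem_Ico : ∀ x y, x ≤ y → (∀ t ∈ T, t ∉ Set.Ico x y) → f x = f y
  eq_bot : ∀ x, (∀ t ∈ T, t < x) → f x = ⊥

namespace IsStepFnOn

variable {α B : Type*} [LinearOrder α] [Lattice B] [BoundedOrder B] {T T' : Finset α}
  {f g : α → B}

theorem mono (hf : IsStepFnOn T f) (hT : T ⊆ T') : IsStepFnOn T' f where
  eq_top x hx := hf.eq_top x fun t ht => hx t (hT ht)
  eq_of_forall_notMem_Ico x y hxy h := hf.eq_of_forall_notMem_Ico x y hxy fun t ht => h t (hT ht)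
  eq_bot x hx := hf.eq_bot x fun t ht => hx t (hT ht)

theorem inf (hf : IsStepFnOn T f) (hg : IsStepFnOn T g) : IsStepFnOn T fun x => f x ⊓ g x where
  eq_top x hx := by rw [hf.eq_top x hx, hg.eq_top x hx, top_inf_eq]
  eq_of_forall_notMem_Ico x y hxy h := by
    rw [hf.eq_of_forall_notMem_Ico x y hxy h, hg.eq_of_forall_notMem_Ico x y hxy h]
  eq_bot x hx := by rw [hf.eq_bot x hx, bot_inf_eq]

theorem sup (hf : IsStepFnOn T f) (hg : IsStepFnOn T g) : IsStepFnOn T fun x => f x ⊔ g x where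
  eq_top x hx := by rw [hf.eq_top x hx, top_sup_eq]
  eq_of_forall_notMem_Ico x y hxy h := by
    rw [hf.eq_of_forall_notMem_Ico x y hxy h, hg.eq_of_forall_notMem_Ico x y hxy h]
  eq_bot x hx := by rw [hf.eq_bot x hx, hg.eq_bot x hx, bot_sup_eq]

theorem eq_of_forall_notMem_Ioo (hf : IsStepFnOn T f) {c d y : α}
    (hgap : ∀ t ∈ T, t ∉ Set.Ioo c d) (hcy : c < y) (hyd : y ≤ d) : f y = f d :=
  hf.eq_of_forall_notMem_Ico y d hyd fun t ht hty => hgap t ht ⟨hcy.trans_le hty.1, hty.2⟩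

theorem le_of_forall_notMem_Ioo (hf : IsStepFnOn T f) (hanti : Antitone f) {x c y : α}
    (hgap : ∀ t ∈ T, t ∉ Set.Ioo x c) (hxy : x < y) : f y ≤ f c := by
  rcases le_or_gt y c with hyc | hcy
  · exact (hf.eq_of_forall_notMem_Ioo hgap hxy hyc).le
  · exact hanti hcy.le

theorem exists_mem_Icc_eq (hf : IsStepFnOn T f) {x t₀ : α} (ht₀ : t₀ ∈ T)
    (hx : x ≤ t₀) :
    ∃ t ∈ T, x ≤ t ∧ t ≤ t₀ ∧ f t = f x := by
  classical
  have hU : (T.filter (x ≤ ·)).Nonempty := ⟨t₀, mem_filter.2 ⟨ht₀, hx⟩⟩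
  obtain ⟨htT, hxt⟩ := mem_filter.1 (min'_mem _ hU)
  refine ⟨_, htT, hxt, min'_le _ _ (mem_filter.2 ⟨ht₀, hx⟩), ?_⟩
  refine (hf.eq_of_forall_notMem_Ico x _ hxt fun t ht hmem => ?_).symm
  exact hmem.2.not_ge (min'_le _ t (mem_filter.2 ⟨ht, hmem.1⟩))

theorem exists_ge_eq (hf : IsStepFnOn T f) {x : α} (hx : f x ≠ ⊥) :
    ∃ t ∈ T, x ≤ t ∧ f t = f x := by
  obtain ⟨t₀, ht₀, hxt₀⟩ : ∃ t ∈ T, x ≤ t := by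
    by_contra! h
    exact hx (hf.eq_bot x h)
  obtain ⟨t, ht, hxt, -, hft⟩ := hf.exists_mem_Icc_eq ht₀ hxt₀
  exact ⟨t, ht, hxt, hft⟩

theorem antitone (hf : IsStepFnOn T f) (h : AntitoneOn f T) : Antitone f := by
  intro x y hxy
  by_cases hy : f y = ⊥
  · exact hy ▸ bot_le
  obtain ⟨t, ht, hyt, hft⟩ := hf.exists_ge_eq hy
  obtain ⟨s, hs, hxs, hst, hfs⟩ := hf.exists_mem_Icc_eq ht (hxy.trans hyt)
  rw [← hft, ← hfs]
  exact h hs ht hst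

theorem finite_range (hf : IsStepFnOn T f) : (Set.range f).Finite := by
  refine ((T.finite_toSet.image f).insert ⊥).subset ?_
  rintro _ ⟨x, rfl⟩
  by_cases hx : f x = ⊥
  · exact Or.inl hx
  · obtain ⟨t, ht, -, hft⟩ := hf.exists_ge_eq hx
    exact Or.inr ⟨t, ht, hft⟩

end IsStepFnOn

section Truncation

variable {α B : Type*} [LinearOrder α] [Lattice B] [BoundedOrder B] {f : α → B}

def truncAt (b : α) (f : α → B) : α → B := fun x => if x ≤ b then f x else ⊥

theorem Antitone.truncAt (hf : Antitone f) (b : α) : Antitone (truncAt b f) := by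
  intro x y hxy
  unfold _root_.truncAt
  split_ifs with hy hx <;> first | exact hf hxy | exact bot_le | exact absurd (hxy.trans hy) hx

theorem IsStepFnOn.truncAt_max' {s : Finset α} {a : α} (hs : s.Nonempty)
    (has : ∀ x ∈ s, x < a) (hf : IsStepFnOn (insert a s) f) : IsStepFnOn s (truncAt (s.max' hs) f) where
  eq_top x hx := by
    have hxb := hx _ (s.max'_mem hs)
    rw [truncAt, if_pos hxb]
    refine hf.eq_top x fun t ht => ?_
    rcases mem_insert.1 ht with rfl | ht
    exacts [hxb.trans (has _ (s.max'_mem hs)).le, hx t ht]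
  eq_of_forall_notMem_Ico x y hxy hgap := by
    unfold truncAt
    by_cases hyb : y ≤ s.max' hs
    · rw [if_pos (hxy.trans hyb), if_pos hyb]
      refine hf.eq_of_forall_notMem_Ico x y hxy fun t ht hmem => ?_
      rcases mem_insert.1 ht with rfl | ht
      exacts [(hmem.2.trans_le hyb).not_ge (has _ (s.max'_mem hs)).le, hgap t ht hmem]
    · have hxb : ¬x ≤ s.max' hs := fun hxb => hgap _ (s.max'_mem hs) ⟨hxb, not_le.1 hyb⟩
      rw [if_neg hxb, if_neg hyb]
  eq_bot x hx := by rw [truncAt, if_neg (not_le.2 (hx _ (s.max'_mem hs)))]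

end Truncation

section FlatFn

variable {D B : Type*} [CommRing D] [LinearOrder D] [IsStrictOrderedRing D] [BooleanAlgebra B]
  {f : D → B}

theorem IsFlatFn.nontrivial (hf : IsFlatFn D B f) : Nontrivial B := by
  obtain ⟨n, -, e, -, he, he0, hlast, -⟩ := hf
  exact ⟨⊥, ⊤, (hlast.trans_le (he0 ▸ he.antitone (Fin.zero_le _))).ne⟩

theorem IsFlatFn.exists_isStepFnOn (hf : IsFlatFn D B f) :
    ∃ T : Finset D, IsStepFnOn T f ∧ AntitoneOn f T := by
  classical
  obtain ⟨n, a, e, ha, he, he0, -, htop, hmid, hbot⟩ := hf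
  have key : ∀ x j, x ≤ a j → (∀ i < j, a i < x) → f x = e j := by
    intro x j hxj hlt
    induction j using Fin.cases with
    | zero => rw [htop x hxj, he0]
    | succ i => exact hmid i x (hlt _ i.castSucc_lt_succ) hxj
  have hmem : ∀ i, a i ∈ univ.image a := fun i => mem_image_of_mem a (mem_univ i)
  refine ⟨univ.image a,
    ⟨fun x hx => htop x (hx _ (hmem 0)), ?_, fun x hx => hbot x (hx _ (hmem _))⟩, ?_⟩
  · intro x y hxy hgap
    by_cases hy : ∃ j, y ≤ a j
    · obtain ⟨j, hyj, hmin⟩ := wellFounded_lt.has_min {j | y ≤ a j} hy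
      have hlt : ∀ i < j, a i < y := fun i hi => lt_of_not_ge fun h => hmin i h hi
      refine (key y j hyj hlt).symm ▸ key x j (hxy.trans hyj) fun i hi => ?_
      exact lt_of_not_ge fun h => hgap _ (hmem i) ⟨h, hlt i hi⟩
    · push Not at hy
      have hx : a (Fin.last n) < x := lt_of_not_ge fun h => hgap _ (hmem _) ⟨h, hy _⟩
      rw [hbot x hx, hbot y (hy _)]
  · simp only [coe_image, coe_univ, Set.image_univ]
    rintro _ ⟨i, rfl⟩ _ ⟨j, rfl⟩ hij
    rw [key _ i le_rfl fun k hk => ha hk, key _ j le_rfl fun k hk => ha hk]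
    exact he.antitone (ha.le_iff_le.1 hij)

theorem IsFlatFn.of_isStepFnOn [Nontrivial B] {T : Finset D} (hanti : Antitone f)
    (hf : IsStepFnOn T f) : IsFlatFn D B f := by
  classical
  -- right endpoints of the maximal intervals on which `f` is constant and `≠ ⊥`
  set J := T.filter fun t => f t ≠ ⊥ ∧ ∀ s ∈ T, t < s → f s ≠ f t
  have hJ : ∀ x, f x ≠ ⊥ → ∃ t ∈ J, x ≤ t ∧ f t = f x := by
    intro x hx
    obtain ⟨t, ht, hxt, hft⟩ := hf.exists_ge_eq hx
    set U := T.filter fun t => x ≤ t ∧ f t = f x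
    have hU : U.Nonempty := ⟨t, mem_filter.2 ⟨ht, hxt, hft⟩⟩
    obtain ⟨hmT, hxm, hfm⟩ := mem_filter.1 (U.max'_mem hU)
    refine ⟨U.max' hU, mem_filter.2 ⟨hmT, hfm ▸ hx, fun s hs hms hfs => ?_⟩, hxm, hfm⟩
    exact hms.not_ge (U.le_max' s (mem_filter.2 ⟨hs, hxm.trans hms.le, hfs.trans hfm⟩))
  obtain ⟨x₀, hx₀⟩ := T.bddBelow
  have htop : f x₀ = ⊤ := hf.eq_top x₀ fun t ht => hx₀ ht
  have hx₀ne : f x₀ ≠ ⊥ := htop ▸ top_ne_bot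
  obtain ⟨n, hn⟩ : ∃ n, J.card = n + 1 :=
    Nat.exists_eq_succ_of_ne_zero (card_ne_zero.2 ⟨_, (hJ x₀ hx₀ne).choose_spec.1⟩)
  set a := J.orderEmbOfFin hn
  have haJ : ∀ i, a i ∈ J := J.orderEmbOfFin_mem hn
  have hval : ∀ x, f x ≠ ⊥ → ∃ i, x ≤ a i ∧ f (a i) = f x := by
    intro x hx
    obtain ⟨t, ht, hxt, hft⟩ := hJ x hx
    obtain ⟨i, rfl⟩ : t ∈ Set.range a := by rw [J.range_orderEmbOfFin hn]; exact ht
    exact ⟨i, hxt, hft⟩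
  have he0 : f (a 0) = ⊤ := by
    obtain ⟨i, -, hfi⟩ := hval x₀ hx₀ne
    exact eq_top_iff.2 (htop ▸ hfi ▸ hanti (a.monotone (Fin.zero_le i)))
  refine ⟨n, a, fun i => f (a i), a.strictMono, fun i j hij => ?_, he0,
    bot_lt_iff_ne_bot.2 (mem_filter.1 (haJ _)).2.1,
    fun x hx => eq_top_iff.2 (he0 ▸ hanti hx), fun i x hix hxi => ?_, fun x hx => ?_⟩
  · exact lt_of_le_of_ne (hanti (a.strictMono hij).le)
      ((mem_filter.1 (haJ i)).2.2 _ (mem_filter.1 (haJ j)).1 (a.strictMono hij))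
  · have hne : f x ≠ ⊥ := ne_bot_of_le_ne_bot (mem_filter.1 (haJ i.succ)).2.1 (hanti hxi)
    obtain ⟨j, hxj, hfj⟩ := hval x hne
    have hij : i.succ ≤ j := Fin.castSucc_lt_iff_succ_le.1 (a.lt_iff_lt.1 (hix.trans_le hxj))
    exact le_antisymm (hfj ▸ hanti (a.monotone hij)) (hanti hxi)
  · by_contra hne
    obtain ⟨j, hxj, -⟩ := hval x hne
    exact (hx.trans_le hxj).not_ge (a.monotone (Fin.le_last j))

theorem IsFlatFn.antitone (hf : IsFlatFn D B f) : Antitone f :=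
  let ⟨_, hT, hanti⟩ := hf.exists_isStepFnOn
  hT.antitone hanti

theorem IsFlatFn.inf {g : D → B} (hf : IsFlatFn D B f) (hg : IsFlatFn D B g) :
    IsFlatFn D B fun x => f x ⊓ g x := by
  have := hf.nontrivial
  obtain ⟨T, hT, -⟩ := hf.exists_isStepFnOn
  obtain ⟨T', hT', -⟩ := hg.exists_isStepFnOn
  exact .of_isStepFnOn (hf.antitone.inf hg.antitone)
    ((hT.mono subset_union_left).inf (hT'.mono subset_union_right))

theorem IsFlatFn.sup {g : D → B} (hf : IsFlatFn D B f) (hg : IsFlatFn D B g) :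
    IsFlatFn D B fun x => f x ⊔ g x := by
  have := hf.nontrivial
  obtain ⟨T, hT, -⟩ := hf.exists_isStepFnOn
  obtain ⟨T', hT', -⟩ := hg.exists_isStepFnOn
  exact .of_isStepFnOn (hf.antitone.sup hg.antitone)
    ((hT.mono subset_union_left).sup (hT'.mono subset_union_right))

theorem IsFlatFn.finite_range (hf : IsFlatFn D B f) : (Set.range f).Finite :=
  let ⟨_, hT, _⟩ := hf.exists_isStepFnOn
  hT.finite_range

end FlatFn

section BlockFn

variable {D B : Type*} [CommRing D] [LinearOrder D] [BooleanAlgebra B]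

def blockFn (u : B) (d : D) : D → B :=
  fun x => if x ≤ 0 then ⊤ else if x ≤ d then u else ⊥

theorem isFlatFn_blockFn [IsStrictOrderedRing D] [Nontrivial B] (u : B) (d : D) :
    IsFlatFn D B (blockFn u d) := by
  refine .of_isStepFnOn (T := {0, d}) (fun x y hxy => ?_)
    ⟨fun x hx => ?_, fun x y hxy hgap => ?_, fun x hx => ?_⟩
  · simp only [blockFn]
    split_ifs <;> first | exact le_rfl | exact le_top | exact bot_le | (exfalso; linarith)
  · simp [blockFn, hx 0 (by simp)]
  · have h0 : x ≤ 0 ↔ y ≤ 0 :=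
      ⟨fun hx => by_contra fun hy => hgap 0 (by simp) ⟨hx, not_le.1 hy⟩, hxy.trans⟩
    have hd : x ≤ d ↔ y ≤ d :=
      ⟨fun hx => by_contra fun hy => hgap d (by simp) ⟨hx, not_le.1 hy⟩, hxy.trans⟩
    simp only [blockFn, h0, hd]
  · simp [blockFn, not_le.2 (hx 0 (by simp)), not_le.2 (hx d (by simp))]

theorem IsDeVriesProx.forall_blockFn_iff {p : B → B → Prop} (hp : IsDeVriesProx B p) {d : D}
    (hd : 0 < d) {u v : B} : (∀ x, p (blockFn u d x) (blockFn v d x)) ↔ p u v := by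
  refine ⟨fun h => by simpa [blockFn, not_le.2 hd] using h d, fun huv x => ?_⟩
  unfold blockFn
  split_ifs
  exacts [hp.top_right ⊤, huv, hp.bot_left ⊥]

end BlockFn

namespace DBFlat

variable {D B : Type*} [CommRing D] [LinearOrder D] [IsStrictOrderedRing D] [BooleanAlgebra B]

/-- `block u 1` is the idempotent `u♭`. -/
def block [Nontrivial B] (u : B) (d : D) : DBFlat D B := ⟨blockFn u d, isFlatFn_blockFn u d⟩

theorem exists_gt_forall_le (f g : DBFlat D B) (x : D) :
    ∃ c, x < c ∧ ∀ y, x < y → f.1 y ≤ f.1 c ∧ g.1 y ≤ g.1 c := by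
  obtain ⟨T, hT, -⟩ := f.2.exists_isStepFnOn
  obtain ⟨T', hT', -⟩ := g.2.exists_isStepFnOn
  obtain ⟨c, hxc, hgap⟩ := (T ∪ T').exists_gt_forall_notMem_Ioo x
  exact ⟨c, hxc, fun y hxy =>
    ⟨(hT.mono subset_union_left).le_of_forall_notMem_Ioo f.2.antitone hgap hxy,
      (hT'.mono subset_union_right).le_of_forall_notMem_Ioo g.2.antitone hgap hxy⟩⟩

theorem finite_of_subset_inf (f g : DBFlat D B) {S : Set B}
    (hS : ∀ x ∈ S, ∃ b₁ b₂, x = f.1 b₁ ⊓ g.1 b₂) : S.Finite := by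
  refine (f.2.finite_range.image2 (· ⊓ ·) g.2.finite_range).subset fun x hx => ?_
  obtain ⟨b₁, b₂, rfl⟩ := hS x hx
  exact Set.mem_image2_of_mem ⟨b₁, rfl⟩ ⟨b₂, rfl⟩

end DBFlat

def flatProx {D B : Type*} [CommRing D] [LinearOrder D] [IsStrictOrderedRing D] [BooleanAlgebra B]
    (p : B → B → Prop) (f g : DBFlat D B) : Prop :=
  ∀ x, p (f.1 x) (g.1 x)

theorem flatProx_exists_between {D B : Type*} [CommRing D] [LinearOrder D] [IsStrictOrderedRing D]
    [BooleanAlgebra B] {p : B → B → Prop} (hp : IsDeVriesProx B p) {s t : DBFlat D B}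
    (hst : flatProx p s t) : ∃ u, flatProx p s u ∧ flatProx p u t := by
  classical
  have := s.2.nontrivial
  obtain ⟨T, hT, -⟩ := s.2.exists_isStepFnOn
  choose w hsw hwt using fun x => hp.exists_between (hst x)
  let k : D → B := fun x => (T.filter (x ≤ ·)).sup w
  have hsk : ∀ x, p (s.1 x) (k x) := by
    intro x
    by_cases hx : s.1 x = ⊥
    · exact hx ▸ hp.bot_left _
    obtain ⟨y, hy, hxy, hsy⟩ := hT.exists_ge_eq hx
    exact hp.mono hsy.ge (hsw y) (le_sup (f := w) (mem_filter.2 ⟨hy, hxy⟩))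
  have hkt : ∀ x, p (k x) (t.1 x) := fun x =>
    hp.finset_sup_left fun y hy => hp.mono le_rfl (hwt y) (t.2.antitone (mem_filter.1 hy).2)
  have hk : IsFlatFn D B k := by
    refine .of_isStepFnOn (T := T) (fun x y hxy => sup_mono fun z hz => ?_) ⟨fun x hx => ?_,
      fun x y hxy hgap => ?_, fun x hx => ?_⟩
    · exact mem_filter.2 ⟨(mem_filter.1 hz).1, hxy.trans (mem_filter.1 hz).2⟩
    · exact top_le_iff.1 (hT.eq_top x hx ▸ hp.le (hsk x))
    · refine congrArg (Finset.sup · w) (filter_congr fun z hz => ⟨fun hxz => ?_, hxy.trans⟩)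
      exact by_contra fun hyz => hgap z hz ⟨hxz, not_le.1 hyz⟩
    · show (T.filter (x ≤ ·)).sup w = ⊥
      rw [filter_false_of_mem fun z hz => not_le.2 (hx z hz), sup_empty]
  exact ⟨⟨k, hk⟩, hsk, hkt⟩

/-- The ring, module and lattice structure of `D[B]♭` transported from `D[B]*`, described
pointwise. -/
structure FlatOps (D B : Type*) [CommRing D] [LinearOrder D] [IsStrictOrderedRing D]
    [BooleanAlgebra B] [CommRing (DBFlat D B)] [Algebra D (DBFlat D B)] [Lattice (DBFlat D B)] :
    Prop where
  le_iff : ∀ f g : DBFlat D B, f ≤ g ↔ ∀ a : D, f.1 a ≤ g.1 a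
  val_zero : ∀ a : D, (0 : DBFlat D B).1 a = if a ≤ 0 then ⊤ else ⊥
  val_one : ∀ a : D, (1 : DBFlat D B).1 a = if a ≤ 1 then ⊤ else ⊥
  isLUB_val_add : ∀ f g : DBFlat D B, ∀ a : D,
    IsLUB {x : B | ∃ b₁ b₂ : D, a ≤ b₁ + b₂ ∧ x = f.1 b₁ ⊓ g.1 b₂} ((f + g).1 a)
  isLUB_val_smul : ∀ b : D, 0 < b → ∀ (f : DBFlat D B) (a : D),
    IsLUB {x : B | ∃ c : D, a ≤ b * c ∧ x = f.1 c} ((b • f).1 a)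
  isLUB_val_mul : ∀ f g : DBFlat D B, 0 ≤ f → 0 ≤ g → ∀ a : D,
    IsLUB {x : B | ∃ b₁ b₂ : D, 0 ≤ b₁ ∧ 0 ≤ b₂ ∧ a ≤ b₁ * b₂ ∧
      x = f.1 b₁ ⊓ g.1 b₂} ((f * g).1 a)

namespace FlatOps

open DBFlat

variable {D B : Type*} [CommRing D] [LinearOrder D] [IsStrictOrderedRing D] [BooleanAlgebra B]
  [CommRing (DBFlat D B)] [Algebra D (DBFlat D B)] [Lattice (DBFlat D B)] (h : FlatOps D B)
include h

theorem val_inf (f g : DBFlat D B) (x : D) : (f ⊓ g).1 x = f.1 x ⊓ g.1 x := by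
  let m : DBFlat D B := ⟨_, f.2.inf g.2⟩
  have hm : m ≤ f ⊓ g :=
    le_inf ((h.le_iff _ _).2 fun _ => inf_le_left) ((h.le_iff _ _).2 fun _ => inf_le_right)
  exact le_antisymm (le_inf ((h.le_iff _ _).1 inf_le_left x) ((h.le_iff _ _).1 inf_le_right x))
    ((h.le_iff _ _).1 hm x)

theorem val_sup (f g : DBFlat D B) (x : D) : (f ⊔ g).1 x = f.1 x ⊔ g.1 x := by
  let m : DBFlat D B := ⟨_, f.2.sup g.2⟩
  have hm : f ⊔ g ≤ m :=
    sup_le ((h.le_iff _ _).2 fun _ => le_sup_left) ((h.le_iff _ _).2 fun _ => le_sup_right)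
  exact le_antisymm ((h.le_iff _ _).1 hm x)
    (sup_le ((h.le_iff _ _).1 le_sup_left x) ((h.le_iff _ _).1 le_sup_right x))

theorem val_neg (f : DBFlat D B) {x c : D} (hc : -x < c) (hfc : ∀ y, -x < y → f.1 y ≤ f.1 c) :
    (-f).1 x = (f.1 c)ᶜ := by
  have hdisj : f.1 c ⊓ (-f).1 x = ⊥ := by
    have := (h.isLUB_val_add f (-f) (c + x)).1 ⟨c, x, le_rfl, rfl⟩
    rwa [add_neg_cancel, h.val_zero, if_neg (by linarith), le_bot_iff] at this
  have hcover : (f + -f).1 0 ≤ f.1 c ⊔ (-f).1 x := by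
    refine (h.isLUB_val_add f (-f) 0).2 ?_
    rintro _ ⟨b₁, b₂, hb, rfl⟩
    rcases le_or_gt x b₂ with hxb | hbx
    · exact inf_le_right.trans (((-f).2.antitone hxb).trans le_sup_right)
    · exact inf_le_left.trans ((hfc b₁ (by linarith)).trans le_sup_left)
  rw [add_neg_cancel, h.val_zero, if_pos le_rfl, top_le_iff] at hcover
  exact (IsCompl.of_eq hdisj hcover).compl_eq.symm

theorem val_smul_one_of_pos {a : D} (ha : 0 < a) (x : D) :
    (a • (1 : DBFlat D B)).1 x = if x ≤ a then ⊤ else ⊥ := by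
  have hlub := h.isLUB_val_smul a ha 1 x
  simp only [h.val_one] at hlub
  split_ifs with hxa
  · exact top_le_iff.1 (hlub.1 ⟨1, by rwa [mul_one], by simp⟩)
  · refine le_bot_iff.1 (hlub.2 ?_)
    rintro _ ⟨c, hc, rfl⟩
    rw [if_neg fun hc1 => hxa (hc.trans (mul_le_of_le_one_right ha.le hc1))]

theorem val_smul_one (a x : D) : (a • (1 : DBFlat D B)).1 x = if x ≤ a then ⊤ else ⊥ := by
  rcases lt_trichotomy a 0 with ha | rfl | ha
  · have hpos := h.val_smul_one_of_pos (neg_pos.2 ha)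
    rw [show a • (1 : DBFlat D B) = -((-a) • 1) by rw [neg_smul, neg_neg]]
    split_ifs with hxa
    · rw [h.val_neg _ (c := -x + 1) (by linarith) fun y hy => by
        rw [hpos, hpos, if_neg (by linarith), if_neg (by linarith)], hpos,
        if_neg (by linarith), compl_bot]
    · rw [h.val_neg _ (c := -a) (by linarith) fun y _ => by
        rw [hpos, hpos, if_pos le_rfl]; exact le_top,
        hpos, if_pos le_rfl, compl_top]
  · rw [zero_smul, h.val_zero]
  · exact h.val_smul_one_of_pos ha x

theorem val_add_smul_one (f : DBFlat D B) (a x : D) : (f + a • 1).1 x = f.1 (x - a) := by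
  have hlub := h.isLUB_val_add f (a • 1) x
  refine le_antisymm (hlub.2 ?_) (hlub.1 ⟨x - a, a, by rw [sub_add_cancel], ?_⟩)
  · rintro _ ⟨b₁, b₂, hb, rfl⟩
    rw [h.val_smul_one]
    split_ifs with hb₂
    · exact inf_le_left.trans (f.2.antitone (by linarith))
    · simp
  · rw [h.val_smul_one, if_pos le_rfl, inf_top_eq]

theorem neg_sup (f g : DBFlat D B) : -(f ⊔ g) = -f ⊓ -g := by
  apply Subtype.ext
  funext x
  obtain ⟨c, hxc, hc⟩ := f.exists_gt_forall_le g (-x)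
  have hfg : ∀ y, -x < y → (f ⊔ g).1 y ≤ (f ⊔ g).1 c := fun y hy => by
    rw [h.val_sup, h.val_sup]
    exact sup_le_sup (hc y hy).1 (hc y hy).2
  rw [h.val_inf, h.val_neg _ hxc hfg, h.val_neg _ hxc fun y hy => (hc y hy).1,
    h.val_neg _ hxc fun y hy => (hc y hy).2, h.val_sup, compl_sup]

section Block

variable [Nontrivial B]

theorem zero_le_block (u : B) (d : D) : 0 ≤ (block u d : DBFlat D B) := by
  refine (h.le_iff _ _).2 fun x => ?_
  rw [h.val_zero]
  split_ifs with hx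
  · simp [block, blockFn, hx]
  · exact bot_le

theorem smul_block_one {d : D} (hd : 0 < d) (u : B) :
    d • block u 1 = (block u d : DBFlat D B) := by
  apply Subtype.ext
  funext x
  have hlub := h.isLUB_val_smul d hd (block u 1) x
  show _ = blockFn u d x
  refine le_antisymm (hlub.2 ?_) ?_
  · rintro _ ⟨c, hc, rfl⟩
    simp only [block, blockFn]
    split_ifs <;> first | exact le_rfl | exact le_top | exact bot_le | (exfalso; nlinarith)
  · simp only [blockFn]
    split_ifs with hx0 hxd
    · calc ⊤ = (block u 1 : DBFlat D B).1 0 := by simp [block, blockFn]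
        _ ≤ _ := hlub.1 ⟨0, by rwa [mul_zero], rfl⟩
    · calc u = (block u 1 : DBFlat D B).1 1 := by simp [block, blockFn]
        _ ≤ _ := hlub.1 ⟨1, by rwa [mul_one], rfl⟩
    · exact bot_le

theorem isIdempotentElem_block_one (u : B) : IsIdempotentElem (block u 1 : DBFlat D B) := by
  have h0 := h.zero_le_block u 1
  apply Subtype.ext
  funext x
  have hlub := h.isLUB_val_mul _ _ h0 h0 x
  show _ = blockFn u 1 x
  refine le_antisymm (hlub.2 ?_) ?_
  · rintro _ ⟨b₁, b₂, hb₁, hb₂, hx, rfl⟩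
    simp only [block, blockFn]
    split_ifs <;> first
      | exact le_top
      | exact inf_le_left
      | exact inf_le_right
      | (exfalso; nlinarith)
      | simp
  · simp only [blockFn]
    split_ifs with hx0 hx1
    · calc ⊤ = (block u 1 : DBFlat D B).1 0 ⊓ (block u 1 : DBFlat D B).1 0 := by
            simp [block, blockFn]
        _ ≤ _ := hlub.1 ⟨0, 0, le_rfl, le_rfl, by rwa [mul_zero], rfl⟩
    · calc u = (block u 1 : DBFlat D B).1 1 ⊓ (block u 1 : DBFlat D B).1 1 := by
            simp [block, blockFn]
        _ ≤ _ := hlub.1 ⟨1, 1, zero_le_one, zero_le_one, by rwa [mul_one], rfl⟩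
    · exact bot_le

theorem val_add_block (F : DBFlat D B) {b d : D} {u : B} (hu : u ≤ F.1 b)
    (hF : ∀ x, b < x → F.1 x = ⊥) (x : D) :
    (F + block u d).1 x = if x ≤ b then F.1 x else if x ≤ b + d then u else ⊥ := by
  have hlub := h.isLUB_val_add F (block u d) x
  refine le_antisymm (hlub.2 ?_) ?_
  · rintro _ ⟨b₁, b₂, hb, rfl⟩
    rcases le_or_gt b₁ b with hb₁ | hb₁
    · simp only [block, blockFn]
      split_ifs <;> first
        | exact inf_le_left.trans (F.2.antitone (by linarith))
        | exact inf_le_right.trans (hu.trans (F.2.antitone ‹_›))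
        | exact inf_le_right
        | (exfalso; linarith)
        | simp
    · rw [hF b₁ hb₁, bot_inf_eq]
      exact bot_le
  · split_ifs with hxb hxd
    · calc F.1 x = F.1 x ⊓ (block u d).1 0 := by simp [block, blockFn]
        _ ≤ _ := hlub.1 ⟨x, 0, by rw [add_zero], rfl⟩
    · calc u = F.1 b ⊓ (block u d).1 (x - b) := by
            simp [block, blockFn, not_le.2 (sub_pos.2 (not_le.1 hxb)), hu,
              show x - b ≤ d by linarith]
        _ ≤ _ := hlub.1 ⟨b, x - b, by rw [add_sub_cancel], rfl⟩
    · exact bot_le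

theorem val_add_smul_block_of_insert {s : Finset D} {a : D} (hs : s.Nonempty)
    (has : ∀ x ∈ s, x < a) {f : D → B} (hanti : Antitone f) (hf : IsStepFnOn (insert a s) f)
    {F : DBFlat D B} (hF : F.1 = truncAt (s.max' hs) f) :
    (F + (a - s.max' hs) • block (f a) 1).1 = f := by
  set b := s.max' hs
  have hba : b < a := has b (s.max'_mem hs)
  funext x
  rw [h.smul_block_one (sub_pos.2 hba), h.val_add_block F
    (by rw [hF, truncAt, if_pos le_rfl]; exact hanti hba.le)
    (fun y hy => by rw [hF, truncAt, if_neg (not_le.2 hy)]), hF, add_sub_cancel]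
  unfold truncAt
  split_ifs with hxb hxa
  · rfl
  · refine (hf.eq_of_forall_notMem_Ioo (fun t ht hmem => ?_) (not_le.1 hxb) hxa).symm
    rcases mem_insert.1 ht with rfl | ht
    exacts [hmem.2.false, hmem.1.not_ge (s.le_max' t ht)]
  · refine (hf.eq_bot x fun t ht => ?_).symm
    rcases mem_insert.1 ht with rfl | ht
    exacts [not_le.1 hxa, (s.le_max' t ht).trans_lt (not_le.1 hxb)]

end Block

section Existence

variable {p : B → B → Prop} (hp : IsDeVriesProx B p) {s t u v : DBFlat D B}
include hp

theorem flatProx_neg (hst : flatProx p s t) : flatProx p (-t) (-s) := fun x => by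
  obtain ⟨c, hxc, hc⟩ := t.exists_gt_forall_le s (-x)
  rw [h.val_neg t hxc fun y hy => (hc y hy).1, h.val_neg s hxc fun y hy => (hc y hy).2]
  exact hp.compl (hst c)

theorem flatProx_add (hst : flatProx p s t) (huv : flatProx p u v) :
    flatProx p (s + u) (t + v) := fun x => by
  refine hp.of_isLUB (h.isLUB_val_add s u x)
    (s.finite_of_subset_inf u fun _ ⟨b₁, b₂, _, hy⟩ => ⟨b₁, b₂, hy⟩) ?_
  rintro _ ⟨b₁, b₂, hb, rfl⟩
  exact hp.mono le_rfl (hp.inf_inf (hst b₁) (huv b₂))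
    ((h.isLUB_val_add t v x).1 ⟨b₁, b₂, hb, rfl⟩)

theorem flatProx_smul {a : D} (ha : 0 < a) (hst : flatProx p s t) :
    flatProx p (a • s) (a • t) := fun x => by
  refine hp.of_isLUB (h.isLUB_val_smul a ha s x)
    (s.2.finite_range.subset fun _ ⟨c, _, hy⟩ => ⟨c, hy.symm⟩) ?_
  rintro _ ⟨c, hc, rfl⟩
  exact hp.mono le_rfl (hst c) ((h.isLUB_val_smul a ha t x).1 ⟨c, hc, rfl⟩)

theorem flatProx_of_smul {a : D} (ha : 0 < a) (hst : flatProx p (a • s) (a • t)) :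
    flatProx p s t := fun x => by
  refine hp.mono ((h.isLUB_val_smul a ha s (a * x)).1 ⟨x, le_rfl, rfl⟩) (hst (a * x))
    ((h.isLUB_val_smul a ha t (a * x)).2 ?_)
  rintro _ ⟨c, hc, rfl⟩
  exact t.2.antitone (le_of_mul_le_mul_left hc ha)

theorem flatProx_mul (hs : 0 ≤ s) (ht : 0 ≤ t) (hu : 0 ≤ u) (hv : 0 ≤ v)
    (hst : flatProx p s t) (huv : flatProx p u v) : flatProx p (s * u) (t * v) := fun x => by
  refine hp.of_isLUB (h.isLUB_val_mul s u hs hu x)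
    (s.finite_of_subset_inf u fun _ ⟨b₁, b₂, _, _, _, hy⟩ => ⟨b₁, b₂, hy⟩) ?_
  rintro _ ⟨b₁, b₂, hb₁, hb₂, hb, rfl⟩
  exact hp.mono le_rfl (hp.inf_inf (hst b₁) (huv b₂))
    ((h.isLUB_val_mul t v ht hv x).1 ⟨b₁, b₂, hb₁, hb₂, hb, rfl⟩)

theorem flatProx_exists_pos (hs : 0 < s) : ∃ t, 0 < t ∧ flatProx p t s := by
  have := s.2.nontrivial
  have hs0 : ∀ x ≤ 0, s.1 x = ⊤ := fun x hx =>
    top_le_iff.1 (by simpa [h.val_zero, hx] using (h.le_iff _ _).1 hs.le x)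
  obtain ⟨b, hb, hsb⟩ : ∃ b, 0 < b ∧ s.1 b ≠ ⊥ := by
    by_contra! hbot
    refine hs.ne (Subtype.ext (funext fun x => ?_))
    rw [h.val_zero]
    split_ifs with hx
    exacts [(hs0 x hx).symm, (hbot x (not_le.1 hx)).symm]
  obtain ⟨w, hw, hws⟩ := hp.exists_ne_bot hsb
  refine ⟨block w b, lt_of_le_of_ne (h.zero_le_block w b) fun h0 => hw ?_, fun x => ?_⟩
  · simpa [h.val_zero, block, blockFn, not_le.2 hb] using congrArg (fun f => f.1 b) h0.symm
  · show p (blockFn w b x) (s.1 x)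
    unfold blockFn
    split_ifs with hx0 hxb
    · exact hs0 x hx0 ▸ hp.top_right ⊤
    · exact hp.mono le_rfl hws (s.2.antitone hxb)
    · exact hp.bot_left _

theorem isProximity_flatProx : IsProximity D (DBFlat D B) (flatProx p) := by
  refine ⟨⟨fun x => ?_, fun x => ?_⟩, fun s t hst => (h.le_iff s t).2 fun x => hp.le (hst x),
    fun s t u v hst htu huv x => hp.mono ((h.le_iff _ _).1 hst x) (htu x) ((h.le_iff _ _).1 huv x),
    fun s t u hst hsu x => (h.val_inf t u x).symm ▸ hp.inf_right (hst x) (hsu x),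
    fun _ _ => h.flatProx_neg hp, fun _ _ _ _ => h.flatProx_add hp,
    fun _ _ _ ha => h.flatProx_smul hp ha, fun _ _ ⟨_, ha, hst⟩ => h.flatProx_of_smul hp ha hst,
    fun _ _ _ _ hs ht hu hv => h.flatProx_mul hp hs ht hu hv,
    fun _ _ => flatProx_exists_between hp, fun _ => h.flatProx_exists_pos hp⟩
  · rw [h.val_zero]
    split_ifs
    exacts [hp.top_right ⊤, hp.bot_left ⊥]
  · rw [h.val_one]
    split_ifs
    exacts [hp.top_right ⊤, hp.bot_left ⊥]

end Existence

section Uniqueness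

variable {p : B → B → Prop} (hp : IsDeVriesProx B p) {q : DBFlat D B → DBFlat D B → Prop}
  (hq : IsProximity D (DBFlat D B) q)
  (hiff : ∀ x y : DBFlat D B, IsIdempotentElem x → IsIdempotentElem y →
    (q x y ↔ flatProx p x y))
include hp hiff

theorem rel_block_one_iff [Nontrivial B] (u v : B) : q (block u 1) (block v 1) ↔ p u v :=
  (hiff _ _ (h.isIdempotentElem_block_one u) (h.isIdempotentElem_block_one v)).trans
    (hp.forall_blockFn_iff one_pos)

include hq

theorem flatProx_of_rel {f g : DBFlat D B} (hfg : q f g) : flatProx p f g := by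
  intro b
  have := f.2.nontrivial
  obtain ⟨T, hT, -⟩ := g.2.exists_isStepFnOn
  obtain ⟨c, hcb, hgap⟩ := T.exists_lt_forall_notMem_Ioo b
  have hδ : 0 < b - c := sub_pos.2 hcb
  let window : DBFlat D B → DBFlat D B :=
    fun u => ((u ⊔ c • 1) + (-c) • 1) ⊓ (b - c) • 1
  have hW : q (window f) (window g) :=
    hq.inf_smul_one (hq.add (hq.sup_smul_one h.neg_sup hfg c) (hq.smul_one (-c))) (b - c)
  have hval : ∀ u x, (window u).1 x =
      (u.1 (x + c) ⊔ if x ≤ 0 then ⊤ else ⊥) ⊓ if x ≤ b - c then ⊤ else ⊥ := by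
    intro u x
    rw [h.val_inf, h.val_add_smul_one, h.val_sup, h.val_smul_one, h.val_smul_one, sub_neg_eq_add]
    simp only [add_le_iff_nonpos_left]
  have hf : block (f.1 b) (b - c) ≤ window f := (h.le_iff _ _).2 fun x => by
    rw [hval]
    simp only [block, blockFn]
    rcases le_or_gt x 0 with hx0 | hx0
    · simp [hx0, hx0.trans hδ.le]
    rcases le_or_gt x (b - c) with hxδ | hxδ
    · simpa [hx0.not_ge, hxδ] using f.2.antitone (show x + c ≤ b by linarith)
    · simp [hx0.not_ge, hxδ.not_ge]
  have hg : window g ≤ block (g.1 b) (b - c) := (h.le_iff _ _).2 fun x => by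
    rw [hval]
    simp only [block, blockFn]
    rcases le_or_gt x 0 with hx0 | hx0
    · simp [hx0]
    rcases le_or_gt x (b - c) with hxδ | hxδ
    · simpa [hx0.not_ge, hxδ] using
        (hT.eq_of_forall_notMem_Ioo hgap (by linarith) (by linarith : x + c ≤ b)).le
    · simp [hx0.not_ge, hxδ.not_ge]
  rw [← h.smul_block_one hδ] at hf hg
  exact (h.rel_block_one_iff hp hiff _ _).1 (hq.of_smul hδ (hq.mono hf hW hg))

theorem exists_rel_of_isStepFnOn (T : Finset D) :
    ∀ f g : D → B, Antitone f → Antitone g → IsStepFnOn T f → IsStepFnOn T g →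
      (∀ t ∈ T, p (f t) (g t)) → ∃ F G : DBFlat D B, F.1 = f ∧ G.1 = g ∧ q F G := by
  classical
  have := (0 : DBFlat D B).2.nontrivial
  induction T using Finset.induction_on_max with
  | empty =>
    intro f _ _ _ hf
    exact absurd ((hf.eq_top 0 (by simp)).symm.trans (hf.eq_bot 0 (by simp))) top_ne_bot
  | insert a s has ih =>
    intro f g hf hg hTf hTg hfg
    rcases s.eq_empty_or_nonempty with rfl | hs
    · have hval : ∀ k : D → B, IsStepFnOn {a} k → (a • 1 : DBFlat D B).1 = k := fun k hk =>
        funext fun x => by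
          rw [h.val_smul_one]
          split_ifs with hxa
          · exact (hk.eq_top x (by simpa using hxa)).symm
          · exact (hk.eq_bot x (by simpa using hxa)).symm
      exact ⟨a • 1, a • 1, hval f hTf, hval g hTg, hq.smul_one a⟩
    · obtain ⟨F, G, hF, hG, hFG⟩ := ih _ _ (hf.truncAt _) (hg.truncAt _)
        (hTf.truncAt_max' hs has) (hTg.truncAt_max' hs has) fun t ht => by
          simpa [truncAt, s.le_max' t ht] using hfg t (mem_insert_of_mem ht)
      have hd : 0 < a - s.max' hs := sub_pos.2 (has _ (s.max'_mem hs))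
      exact ⟨_, _, h.val_add_smul_block_of_insert hs has hf hTf hF,
        h.val_add_smul_block_of_insert hs has hg hTg hG,
        hq.add hFG (hq.smul hd ((h.rel_block_one_iff hp hiff _ _).2
          (hfg a (mem_insert_self a s))))⟩

theorem rel_of_flatProx {f g : DBFlat D B} (hfg : flatProx p f g) : q f g := by
  obtain ⟨T, hT, -⟩ := f.2.exists_isStepFnOn
  obtain ⟨T', hT', -⟩ := g.2.exists_isStepFnOn
  obtain ⟨F, G, hF, hG, hFG⟩ := h.exists_rel_of_isStepFnOn hp hq hiff (T ∪ T') f.1 g.1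
    f.2.antitone g.2.antitone (hT.mono subset_union_left) (hT'.mono subset_union_right)
    fun t _ => hfg t
  rwa [← Subtype.ext hF, ← Subtype.ext hG]

end Uniqueness

end FlatOps

/-- a de Vries proximity `≺` on `B` lifts pointwise to a proximity `≺♭` on
the de Vries power `D[B]♭`, and `≺♭` is the unique proximity whose restriction to the
idempotents corresponds to `≺` under the canonical isomorphism `e ↦ e♭`. -/
theorem statement16 (D B : Type*) [CommRing D] [LinearOrder D] [IsStrictOrderedRing D] [BooleanAlgebra B]
    (p : B → B → Prop) (hp : IsDeVriesProx B p)
    [CommRing (DBFlat D B)] [Algebra D (DBFlat D B)] [Lattice (DBFlat D B)]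
    (hle : ∀ f g : DBFlat D B, f ≤ g ↔ ∀ a : D, f.1 a ≤ g.1 a)
    (hzero : ((0 : DBFlat D B)).1 = fun a : D => if a ≤ 0 then (⊤ : B) else ⊥)
    (hone : ((1 : DBFlat D B)).1 = fun a : D => if a ≤ 1 then (⊤ : B) else ⊥)
    (hadd : ∀ f g : DBFlat D B, ∀ a : D,
      IsLUB {x : B | ∃ b₁ b₂ : D, a ≤ b₁ + b₂ ∧ x = f.1 b₁ ⊓ g.1 b₂} ((f + g).1 a))
    (hsmul : ∀ b : D, 0 < b → ∀ (f : DBFlat D B) (a : D),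
      IsLUB {x : B | ∃ c : D, a ≤ b * c ∧ x = f.1 c} ((b • f).1 a))
    (hmul : ∀ f g : DBFlat D B, 0 ≤ f → 0 ≤ g → ∀ a : D,
      IsLUB {x : B | ∃ b₁ b₂ : D, 0 ≤ b₁ ∧ 0 ≤ b₂ ∧ a ≤ b₁ * b₂ ∧ x = f.1 b₁ ⊓ g.1 b₂}
        ((f * g).1 a)) :
    IsProximity D (DBFlat D B) (fun f g => ∀ b : D, p (f.1 b) (g.1 b)) ∧
    (∀ (e f : B) (x y : DBFlat D B),
      (x.1 = fun a : D => if a ≤ 0 then ⊤ else if a ≤ 1 then e else ⊥) →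
      (y.1 = fun a : D => if a ≤ 0 then ⊤ else if a ≤ 1 then f else ⊥) →
      (p e f ↔ ∀ b : D, p (x.1 b) (y.1 b))) ∧
    (∀ q : DBFlat D B → DBFlat D B → Prop, IsProximity D (DBFlat D B) q →
      (∀ x y : DBFlat D B, IsIdempotentElem x → IsIdempotentElem y →
        (q x y ↔ ∀ b : D, p (x.1 b) (y.1 b))) →
      q = fun f g => ∀ b : D, p (f.1 b) (g.1 b)) := by
  have h : FlatOps D B :=
    ⟨hle, congrFun hzero, congrFun hone, hadd, hsmul, hmul⟩
  refine ⟨h.isProximity_flatProx hp, fun e f x y hx hy => ?_, fun q hq hiff => ?_⟩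
  · rw [hx, hy]
    exact (hp.forall_blockFn_iff one_pos).symm
  · funext f g
    exact propext ⟨h.flatProx_of_rel hp hq hiff, h.rel_of_flatProx hp hq hiff⟩
end

section
/- Let A be an f-ring and e ∈ A. Then e is idempotent (e² = e) if and only if e = (2e) ∧ 1. -/
open Finset

/-!
Write an idempotent as `e = p - n` with `p = e⁺`, `n = e⁻`. Expanding `e² = e` gives
`p² + n² + n = pn + p + np`; since `n` is disjoint from `p` and, by the f-ring axiom, from `np`,
this yields `n ≤ pn`. In a unital f-ring (where `0 ≤ 1`) this forces `n = 0`: truncating with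
`w = n ⊓ 1` gives `pw = 0` and `nw = n`, so `d = n - wn` satisfies `nd = 0` and inherits
`d ≤ pd`, whence `d ≤ d² ≤ nd = 0`; then `pn = pwn = 0`. Thus idempotents are positive, and for
the idempotents `e` and `1 - e` the meet `m = e ⊓ (1 - e)` satisfies
`m = me + m(1 - e) ≤ (1 - e)e + e(1 - e) = 0`. Conversely `2e ⊓ 1 = e + e ⊓ (1 - e)`, so
`e = 2e ⊓ 1` says `e ⊓ (1 - e) = 0`, and then `e(1 - e) ≤ e` is disjoint from `e`, hence zero.
-/

theorem eq_zero_of_le_of_inf_eq_zero {α : Type*} [Lattice α] [Zero α] {a b : α} (h : a ≤ b)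
    (hab : a ⊓ b = 0) : a = 0 :=
  (inf_eq_left.2 h).symm.trans hab

theorem inf_eq_zero_of_le {α : Type*} [Lattice α] [Zero α] {a b c : α} (ha : 0 ≤ a) (hc : 0 ≤ c)
    (hab : a ≤ b) (hbc : b ⊓ c = 0) : a ⊓ c = 0 :=
  le_antisymm ((inf_le_inf_right c hab).trans_eq hbc) (le_inf ha hc)

section LatticeOrderedGroup

variable {α : Type*} [AddCommGroup α] [Lattice α] [IsOrderedAddMonoid α] {a b c : α}

theorem inf_add_le_inf_add_inf (ha : 0 ≤ a) (hb : 0 ≤ b) (hc : 0 ≤ c) :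
    c ⊓ (a + b) ≤ c ⊓ a + c ⊓ b := by
  have h₁ : c ⊓ (a + b) ≤ c ⊓ a + b :=
    calc c ⊓ (a + b) ≤ (c + b) ⊓ (a + b) := inf_le_inf_right _ (le_add_of_nonneg_right hb)
      _ = c ⊓ a + b := (inf_add c a b).symm
  have h₂ : c ⊓ (a + b) ≤ c ⊓ a + c :=
    inf_le_left.trans (le_add_of_nonneg_left (le_inf hc ha))
  calc c ⊓ (a + b) ≤ (c ⊓ a + b) ⊓ (c ⊓ a + c) := le_inf h₁ h₂
    _ = c ⊓ a + c ⊓ b := by rw [add_inf, inf_comm]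

theorem inf_add_eq_zero (ha : 0 ≤ a) (hb : 0 ≤ b) (hc : 0 ≤ c) (hca : c ⊓ a = 0)
    (hcb : c ⊓ b = 0) : c ⊓ (a + b) = 0 :=
  le_antisymm ((inf_add_le_inf_add_inf ha hb hc).trans_eq (by rw [hca, hcb, add_zero]))
    (le_inf hc (add_nonneg ha hb))

theorem le_of_le_add_of_inf_eq_zero (ha : 0 ≤ a) (hb : 0 ≤ b) (hc : 0 ≤ c) (h : c ≤ a + b)
    (hcb : c ⊓ b = 0) : c ≤ a :=
  calc c = c ⊓ (a + b) := (inf_eq_left.2 h).symm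
    _ ≤ c ⊓ a + c ⊓ b := inf_add_le_inf_add_inf ha hb hc
    _ = c ⊓ a := by rw [hcb, add_zero]
    _ ≤ a := inf_le_right

end LatticeOrderedGroup

theorem eq_two_mul_inf_one_iff {R : Type*} [Ring R] [Lattice R] [IsOrderedAddMonoid R] (e : R) :
    e = 2 * e ⊓ 1 ↔ e ⊓ (1 - e) = 0 := by
  have h : 2 * e ⊓ 1 = e + e ⊓ (1 - e) := by rw [add_inf, add_sub_cancel, two_mul]
  rw [h, left_eq_add]

theorem IsIdempotentElem.inf_one_sub_eq_zero {R : Type*} [Ring R] [Lattice R] [IsOrderedRing R]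
    {e : R} (he : IsIdempotentElem e) (he₀ : 0 ≤ e) (he₁ : 0 ≤ 1 - e) : e ⊓ (1 - e) = 0 := by
  set m := e ⊓ (1 - e)
  have hm : 0 ≤ m := le_inf he₀ he₁
  have hme : m * e ≤ 0 :=
    (mul_le_mul_of_nonneg_right inf_le_right he₀).trans_eq he.one_sub_mul_self
  have hmf : m * (1 - e) ≤ 0 :=
    (mul_le_mul_of_nonneg_right inf_le_left he₁).trans_eq he.mul_one_sub_self
  refine le_antisymm ?_ hm
  calc m = m * e + m * (1 - e) := by rw [← mul_add, add_sub_cancel, mul_one]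
    _ ≤ 0 := add_nonpos hme hmf

/-- The f-ring axiom; the lattice-ordered ring structure is carried by the instance arguments. -/
def IsFRing (A : Type*) [Mul A] [Zero A] [Lattice A] : Prop :=
  ∀ r s t : A, s ⊓ t = 0 → 0 ≤ r → r * s ⊓ t = 0

namespace IsFRing

theorem zero_le_one {A : Type*} [Ring A] [Lattice A] [IsOrderedAddMonoid A] (hA : IsFRing A)
    (hmul : ∀ a b : A, 0 ≤ a → 0 ≤ b → 0 ≤ a * b) : (0 : A) ≤ 1 := by
  set q := (1 : A)⁺
  set m := (1 : A)⁻
  have hm : 0 ≤ m := negPart_nonneg 1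
  have hmq : m * q = m + m * m := by
    have h : m * (q - m) = m := by rw [posPart_sub_negPart, mul_one]
    rwa [mul_sub, sub_eq_iff_eq_add] at h
  have hm0 : m = 0 := by
    refine eq_zero_of_le_of_inf_eq_zero (hmq ▸ le_add_of_nonneg_right (hmul m m hm hm)) ?_
    rw [inf_comm]
    exact hA m q m (posPart_inf_negPart_eq_zero 1) hm
  calc (0 : A) ≤ q := posPart_nonneg 1
    _ = q - m := by rw [hm0, sub_zero]
    _ = 1 := posPart_sub_negPart 1

variable {A : Type*} [Ring A] [Lattice A] [IsOrderedRing A]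

theorem mul_eq_zero_of_inf_eq_zero (hA : IsFRing A) {x u : A} (hx : 0 ≤ x) (hu : u ≤ 1)
    (hux : u ⊓ x = 0) : x * u = 0 :=
  eq_zero_of_le_of_inf_eq_zero (mul_le_of_le_one_right hx hu) (hA x u x hux hx)

theorem mul_inf_one_eq_zero_and_mul_inf_one_eq_self (hA : IsFRing A) {p x : A} (hp : 0 ≤ p)
    (hx : 0 ≤ x) (hpx : p ⊓ x = 0) (hle : x ≤ p * x) : p * (x ⊓ 1) = 0 ∧ x * (x ⊓ 1) = x := by
  set w := x ⊓ 1
  have hw : 0 ≤ w := le_inf hx _root_.zero_le_one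
  have hpw : p * w = 0 :=
    hA.mul_eq_zero_of_inf_eq_zero hp inf_le_right
      (inf_eq_zero_of_le hw hp inf_le_left (by rw [inf_comm, hpx]))
  have hxw : (x - w) ⊓ (1 - w) = 0 := by rw [← inf_sub, sub_self]
  have hx_disj : x ⊓ (1 - w) = 0 := by
    have hpxw : p * (x - w) = p * x := by rw [mul_sub, hpw, sub_zero]
    refine inf_eq_zero_of_le hx (sub_nonneg.2 inf_le_right) hle ?_
    rw [← hpxw]
    exact hA p _ _ hxw hp
  refine ⟨hpw, ?_⟩
  have h := hA.mul_eq_zero_of_inf_eq_zero hx (sub_le_self 1 hw) (by rw [inf_comm, hx_disj])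
  rwa [mul_sub, mul_one, sub_eq_zero, eq_comm] at h

theorem eq_zero_of_le_mul_of_inf_eq_zero (hA : IsFRing A) {p x : A} (hp : 0 ≤ p) (hx : 0 ≤ x)
    (hpx : p ⊓ x = 0) (hle : x ≤ p * x) : x = 0 := by
  obtain ⟨hpw, hxw⟩ := hA.mul_inf_one_eq_zero_and_mul_inf_one_eq_self hp hx hpx hle
  set w := x ⊓ 1
  set d := x - w * x with hd_def
  have hd : 0 ≤ d := sub_nonneg.2 (mul_le_of_le_one_left hx inf_le_right)
  have hdx : d ≤ x := sub_le_self x (mul_nonneg (le_inf hx _root_.zero_le_one) hx)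
  have hpd : p * d = p * x := by rw [hd_def, mul_sub, ← mul_assoc, hpw, zero_mul, sub_zero]
  have hxd : x * d = 0 := by rw [hd_def, mul_sub, ← mul_assoc, hxw, sub_self]
  have hpd_disj : p ⊓ d = 0 := by
    rw [inf_comm]
    exact inf_eq_zero_of_le hd hp hdx (by rw [inf_comm, hpx])
  have hd0 : d = 0 := by
    obtain ⟨-, hdd⟩ := hA.mul_inf_one_eq_zero_and_mul_inf_one_eq_self hp hd hpd_disj
      (hdx.trans (hle.trans_eq hpd.symm))
    refine le_antisymm ?_ hd
    calc d = d * (d ⊓ 1) := hdd.symm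
      _ ≤ d * d := mul_le_mul_of_nonneg_left inf_le_left hd
      _ ≤ x * d := mul_le_mul_of_nonneg_right hdx hd
      _ = 0 := hxd
  have hpx0 : p * x = 0 := by
    rw [hd_def, sub_eq_zero] at hd0
    rw [hd0, ← mul_assoc, hpw, zero_mul]
  exact le_antisymm (hle.trans_eq hpx0) hx

theorem nonneg_of_isIdempotentElem (hA : IsFRing A) {e : A} (he : IsIdempotentElem e) :
    0 ≤ e := by
  set p := e⁺
  set n := e⁻
  have hp : 0 ≤ p := posPart_nonneg e
  have hn : 0 ≤ n := negPart_nonneg e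
  have hpn : p ⊓ n = 0 := posPart_inf_negPart_eq_zero e
  have hsq : p * p + (n * n + n) = p * n + (p + n * p) := by
    have h : (p - n) * (p - n) = p - n := by rw [posPart_sub_negPart]; exact he
    rw [← sub_eq_zero] at h ⊢
    rw [← h]
    noncomm_ring
  have hn_le : n ≤ p * n + (p + n * p) :=
    calc n ≤ n * n + n := le_add_of_nonneg_left (mul_nonneg hn hn)
      _ ≤ p * p + (n * n + n) := le_add_of_nonneg_left (mul_nonneg hp hp)
      _ = p * n + (p + n * p) := hsq
  have hn_disj : n ⊓ (p + n * p) = 0 := by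
    refine inf_add_eq_zero hp (mul_nonneg hn hp) hn (by rw [inf_comm, hpn]) ?_
    rw [inf_comm]
    exact hA n p n hpn hn
  have hn0 : n = 0 :=
    hA.eq_zero_of_le_mul_of_inf_eq_zero hp hn hpn
      (le_of_le_add_of_inf_eq_zero (mul_nonneg hp hn) (add_nonneg hp (mul_nonneg hn hp)) hn
        hn_le hn_disj)
  calc 0 ≤ p := hp
    _ = p - n := by rw [hn0, sub_zero]
    _ = e := posPart_sub_negPart e

theorem isIdempotentElem_of_inf_one_sub_eq_zero (hA : IsFRing A) {e : A}
    (h : e ⊓ (1 - e) = 0) : IsIdempotentElem e := by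
  have he : 0 ≤ e := h ▸ inf_le_left
  have he_one : e * (1 - e) = 0 :=
    hA.mul_eq_zero_of_inf_eq_zero he (sub_le_self 1 he) (by rw [inf_comm, h])
  rwa [mul_sub, mul_one, sub_eq_zero, eq_comm] at he_one

theorem isIdempotentElem_iff_inf_one_sub_eq_zero (hA : IsFRing A) {e : A} :
    IsIdempotentElem e ↔ e ⊓ (1 - e) = 0 :=
  ⟨fun he => he.inf_one_sub_eq_zero (hA.nonneg_of_isIdempotentElem he)
    (hA.nonneg_of_isIdempotentElem he.one_sub), hA.isIdempotentElem_of_inf_one_sub_eq_zero⟩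

end IsFRing

/-- in an f-ring, `e` is idempotent iff `e = 2e ∧ 1`. -/
theorem statement17 (A : Type*) [Ring A] [Lattice A]
    (hadd : ∀ r s t : A, s ≤ t → s + r ≤ t + r)
    (hmulpos : ∀ s t : A, 0 ≤ s → 0 ≤ t → 0 ≤ s * t)
    (hf : ∀ r s t : A, s ⊓ t = 0 → 0 ≤ r → (r * s) ⊓ t = 0)
    (e : A) :
    IsIdempotentElem e ↔ e = (2 * e) ⊓ 1 := by
  have hA : IsFRing A := hf
  have : IsOrderedAddMonoid A := { add_le_add_left := fun a b h c => hadd c a b h }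
  have : ZeroLEOneClass A := ⟨hA.zero_le_one hmulpos⟩
  have : IsOrderedRing A := IsOrderedRing.of_mul_nonneg hmulpos
  rw [eq_two_mul_inf_one_iff]
  exact hA.isIdempotentElem_iff_inf_one_sub_eq_zero
end

section
/- Let D be a totally ordered integral domain and let α : S → T be a proximity morphism between proximity Baer-Specker D-algebras (S, ◁) and (T, ◁). Then α maps idempotents to idempotents, and the restriction α|_{Id(S)} : Id(S) → Id(T) is a de Vries morphism. -/
/-!
Every element of a Specker algebra is a combination `∑ aᵢ • eᵢ` over a complete family of nonzero
orthogonal idempotents, and along such a family the canonical order and the meet are computed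
coefficientwise. So `u` is idempotent iff `2 • u ⊓ 1 = u`, and `e ⊓ f = e * f` for idempotents:
both are expressed through `⊓`, nonnegative scalars and `1`, which a proximity morphism preserves.
The join condition reduces, through (M4) and monotonicity, to finding for every `s ◁ f` an
idempotent `e ◁ f` above `s`.
-/

open Finset

section OrthogonalIdempotents

variable {R : Type*} [CommRing R] {ι κ : Type*}

theorem OrthogonalIdempotents.mul {e : ι → R} {f : κ → R} (he : OrthogonalIdempotents e)
    (hf : OrthogonalIdempotents f) : OrthogonalIdempotents fun p : ι × κ => e p.1 * f p.2 where
  idem p := (he.idem p.1).mul (hf.idem p.2)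
  ortho p q hpq := by
    show e p.1 * f p.2 * (e q.1 * f q.2) = 0
    rw [mul_mul_mul_comm]
    by_cases h : p.1 = q.1
    · rw [hf.ortho fun h' => hpq (Prod.ext h h'), mul_zero]
    · rw [he.ortho h, zero_mul]

variable [Fintype ι] [Fintype κ]

theorem CompleteOrthogonalIdempotents.mul {e : ι → R} {f : κ → R}
    (he : CompleteOrthogonalIdempotents e) (hf : CompleteOrthogonalIdempotents f) :
    CompleteOrthogonalIdempotents fun p : ι × κ => e p.1 * f p.2 where
  toOrthogonalIdempotents := he.toOrthogonalIdempotents.mul hf.toOrthogonalIdempotents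
  complete := by rw [Fintype.sum_prod_type, ← Finset.sum_mul_sum, he.complete, hf.complete, one_mul]

variable {D : Type*} [CommRing D] [Algebra D R]

theorem sum_smul_mul_sum_smul (a : ι → D) (e : ι → R) (b : κ → D) (f : κ → R) :
    (∑ i, a i • e i) * (∑ j, b j • f j) = ∑ p : ι × κ, (a p.1 * b p.2) • (e p.1 * f p.2) := by
  simp only [Finset.sum_mul_sum, Fintype.sum_prod_type, smul_mul_smul_comm]

theorem CompleteOrthogonalIdempotents.sum_smul_add_sum_smul {e : ι → R} {f : κ → R}
    (he : CompleteOrthogonalIdempotents e) (hf : CompleteOrthogonalIdempotents f)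
    (a : ι → D) (b : κ → D) :
    ∑ i, a i • e i + ∑ j, b j • f j = ∑ p : ι × κ, (a p.1 + b p.2) • (e p.1 * f p.2) := by
  simp only [Fintype.sum_prod_type, add_smul, Finset.sum_add_distrib]
  congr 1
  · simp only [← Finset.smul_sum, ← Finset.mul_sum, hf.complete, mul_one]
  · rw [Finset.sum_comm]
    simp only [← Finset.smul_sum, ← Finset.sum_mul, he.complete, one_mul]

theorem OrthogonalIdempotents.sum_smul_mul_s18 {e : ι → R} (he : OrthogonalIdempotents e)
    (a : ι → D) (k : ι) : (∑ i, a i • e i) * e k = a k • e k := by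
  rw [Finset.sum_mul, Finset.sum_eq_single k (fun i _ hik => by rw [smul_mul_assoc, he.ortho hik,
    smul_zero]) (by simp), smul_mul_assoc, (he.idem k).eq]

theorem OrthogonalIdempotents.isIdempotentElem_sum_smul {e : ι → R}
    (he : OrthogonalIdempotents e) {a : ι → D} (ha : ∀ i, a i * a i = a i) :
    IsIdempotentElem (∑ i, a i • e i) := by
  calc (∑ i, a i • e i) * ∑ i, a i • e i = ∑ i, (a i * a i) • e i := by
        simp only [Finset.mul_sum, mul_smul_comm, he.sum_smul_mul_s18, smul_smul]
    _ = ∑ i, a i • e i := by simp only [ha]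

end OrthogonalIdempotents

-- Indexed by an arbitrary finite type, so that common refinements over `ι × κ` need no reindexing.
def HasOrthDecomp (D : Type*) {R : Type*} [CommRing D] [CommRing R] [Algebra D R] (x : R) :
    Prop :=
  ∃ (ι : Type) (_ : Fintype ι) (a : ι → D) (e : ι → R),
    CompleteOrthogonalIdempotents e ∧ x = ∑ i, a i • e i

section Decomposition

variable {D R : Type*} [CommRing D] [CommRing R] [Algebra D R]

namespace HasOrthDecomp

theorem of_isIdempotentElem {e : R} (he : IsIdempotentElem e) : HasOrthDecomp D e :=
  ⟨Fin 2, inferInstance, ![1, 0], ![e, 1 - e], .of_isIdempotentElem he, by simp⟩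

theorem algebraMap (c : D) : HasOrthDecomp D (algebraMap D R c) :=
  ⟨Unit, inferInstance, fun _ => c, fun _ => 1, CompleteOrthogonalIdempotents.unique_iff.2 rfl,
    by simp [Algebra.algebraMap_eq_smul_one]⟩

theorem add {x y : R} (hx : HasOrthDecomp D x) (hy : HasOrthDecomp D y) :
    HasOrthDecomp D (x + y) := by
  obtain ⟨ι, _, a, e, he, rfl⟩ := hx
  obtain ⟨κ, _, b, f, hf, rfl⟩ := hy
  exact ⟨ι × κ, inferInstance, _, _, he.mul hf, he.sum_smul_add_sum_smul hf a b⟩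

theorem mul {x y : R} (hx : HasOrthDecomp D x) (hy : HasOrthDecomp D y) :
    HasOrthDecomp D (x * y) := by
  obtain ⟨ι, _, a, e, he, rfl⟩ := hx
  obtain ⟨κ, _, b, f, hf, rfl⟩ := hy
  exact ⟨ι × κ, inferInstance, _, _, he.mul hf, sum_smul_mul_sum_smul a e b f⟩

theorem exists_ne_zero {x : R} (hx : HasOrthDecomp D x) :
    ∃ (ι : Type) (_ : Fintype ι) (a : ι → D) (e : ι → R),
      CompleteOrthogonalIdempotents e ∧ (∀ i, e i ≠ 0) ∧ x = ∑ i, a i • e i := by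
  classical
  obtain ⟨ι, _, a, e, he, rfl⟩ := hx
  have hsum (g : ι → R) (hg : ∀ i, e i = 0 → g i = 0) : ∑ i : {i // e i ≠ 0}, g i = ∑ i, g i := by
    rw [← Finset.sum_subtype (univ.filter (e · ≠ 0)) (by simp),
      Finset.sum_filter_of_ne fun i _ => mt (hg i)]
  refine ⟨{i // e i ≠ 0}, inferInstance, fun i => a i, fun i => e i,
    ⟨he.embedding (Function.Embedding.subtype _), ?_⟩, fun i => i.2, ?_⟩
  · exact (hsum e fun _ => id).trans he.complete
  · exact (hsum _ fun i hi => by rw [hi, smul_zero]).symm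

end HasOrthDecomp

theorem IsSpecker.hasOrthDecomp (hsp : IsSpecker D R) (x : R) : HasOrthDecomp D x :=
  Algebra.adjoin_induction (fun _ he => .of_isIdempotentElem he) HasOrthDecomp.algebraMap
    (fun _ _ _ _ => .add) (fun _ _ _ _ => .mul) (hsp.2 ▸ Algebra.mem_top : x ∈ _)

end Decomposition

def HasSpeckerOrder (D R : Type*) [CommRing D] [LinearOrder D] [IsStrictOrderedRing D]
    [CommRing R] [Algebra D R] [Lattice R] : Prop :=
  ∀ s t : R, s ≤ t ↔ specLE D R s t

section Order

variable {D R : Type*} [CommRing D] [LinearOrder D] [IsStrictOrderedRing D] [CommRing R]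
  [Algebra D R]

theorem OrthNonnegDecomp.of_sum_smul {ι : Type*} [Fintype ι] {a : ι → D} {e : ι → R}
    (ha : ∀ i, 0 ≤ a i) (he : OrthogonalIdempotents e) : OrthNonnegDecomp D R (∑ i, a i • e i) :=
  let q := (Fintype.equivFin ι).symm
  ⟨_, a ∘ q, e ∘ q, fun _ => ha _, fun _ => he.idem _, fun _ _ hij => he.ortho (q.injective.ne hij),
    (Equiv.sum_comp q fun i => a i • e i).symm⟩

theorem OrthNonnegDecomp.exists_complete {x : R} (hx : OrthNonnegDecomp D R x) :
    ∃ (n : ℕ) (a : Option (Fin n) → D) (e : Option (Fin n) → R),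
      (∀ i, 0 ≤ a i) ∧ CompleteOrthogonalIdempotents e ∧ x = ∑ i, a i • e i := by
  obtain ⟨n, a, e, ha, he, ho, rfl⟩ := hx
  refine ⟨n, (Option.elim · 0 a), (Option.elim · (1 - ∑ i, e i) e), ?_,
    .option ⟨he, fun i j hij => ho i j hij⟩, by simp [Fintype.sum_option]⟩
  rintro (_ | i)
  exacts [le_rfl, ha i]

theorem OrthNonnegDecomp.add {x y : R} (hx : OrthNonnegDecomp D R x)
    (hy : OrthNonnegDecomp D R y) : OrthNonnegDecomp D R (x + y) := by
  obtain ⟨n, a, e, ha, he, rfl⟩ := hx.exists_complete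
  obtain ⟨m, b, f, hb, hf, rfl⟩ := hy.exists_complete
  rw [he.sum_smul_add_sum_smul hf]
  exact .of_sum_smul (fun p => add_nonneg (ha p.1) (hb p.2))
    (he.toOrthogonalIdempotents.mul hf.toOrthogonalIdempotents)

theorem OrthNonnegDecomp.mul {x y : R} (hx : OrthNonnegDecomp D R x)
    (hy : OrthNonnegDecomp D R y) : OrthNonnegDecomp D R (x * y) := by
  obtain ⟨n, a, e, ha, he, ho, rfl⟩ := hx
  obtain ⟨m, b, f, hb, hf, hof, rfl⟩ := hy
  rw [sum_smul_mul_sum_smul]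
  exact .of_sum_smul (fun p => mul_nonneg (ha p.1) (hb p.2))
    (OrthogonalIdempotents.mul ⟨he, fun i j hij => ho i j hij⟩ ⟨hf, fun i j hij => hof i j hij⟩)

theorem OrthNonnegDecomp.smul {x : R} (hx : OrthNonnegDecomp D R x) {c : D} (hc : 0 ≤ c) :
    OrthNonnegDecomp D R (c • x) := by
  obtain ⟨n, a, e, ha, he, ho, rfl⟩ := hx
  simp only [Finset.smul_sum, smul_smul]
  exact ⟨n, _, e, fun i => mul_nonneg hc (ha i), he, ho, rfl⟩

theorem OrthNonnegDecomp.of_isIdempotentElem_s18 {e : R} (he : IsIdempotentElem e) :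
    OrthNonnegDecomp D R e :=
  ⟨1, fun _ => 1, fun _ => e, fun _ => zero_le_one, fun _ => he,
    fun i j hij => absurd (Subsingleton.elim i j) hij, by simp⟩

namespace HasSpeckerOrder

variable [Lattice R] {ι : Type*} [Fintype ι]

theorem nonneg_iff (hle : HasSpeckerOrder D R) {x : R} : 0 ≤ x ↔ OrthNonnegDecomp D R x := by
  rw [hle, specLE, sub_zero]

theorem isOrderedRing (hle : HasSpeckerOrder D R) : IsOrderedRing R :=
  have : IsOrderedAddMonoid R :=
    { add_le_add_left := fun a b hab c => by rwa [hle, specLE, add_sub_add_right_eq_sub, ← specLE,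
        ← hle] }
  have : ZeroLEOneClass R := ⟨hle.nonneg_iff.2 (.of_isIdempotentElem .one)⟩
  .of_mul_nonneg fun _ _ ha hb => hle.nonneg_iff.2 ((hle.nonneg_iff.1 ha).mul (hle.nonneg_iff.1 hb))

theorem smul_nonneg (hle : HasSpeckerOrder D R) {c : D} {x : R} (hc : 0 ≤ c) (hx : 0 ≤ x) :
    0 ≤ c • x :=
  hle.nonneg_iff.2 ((hle.nonneg_iff.1 hx).smul hc)

theorem nonneg_of_isIdempotentElem (hle : HasSpeckerOrder D R) {e : R} (he : IsIdempotentElem e) :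
    0 ≤ e :=
  hle.nonneg_iff.2 (.of_isIdempotentElem he)

theorem le_one_of_isIdempotentElem (hle : HasSpeckerOrder D R) {e : R}
    (he : IsIdempotentElem e) : e ≤ 1 := by
  have := hle.isOrderedRing
  exact sub_nonneg.1 (hle.nonneg_of_isIdempotentElem he.one_sub)

theorem nonneg_of_smul_nonneg (hle : HasSpeckerOrder D R) (htf : SpTorsionFree D R) {c : D}
    {e : R} (he : IsIdempotentElem e) (hne : e ≠ 0) (h : 0 ≤ c • e) : 0 ≤ c := by
  have := hle.isOrderedRing
  by_contra! hc
  have hle0 : c • e ≤ 0 := by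
    simpa [neg_smul] using hle.smul_nonneg (neg_nonneg.2 hc.le) (hle.nonneg_of_isIdempotentElem he)
  exact (htf c e (le_antisymm hle0 h)).elim hc.ne hne

theorem sum_smul_le_sum_smul (hle : HasSpeckerOrder D R) {e : ι → R}
    (he : OrthogonalIdempotents e) {a b : ι → D} (hab : ∀ i, a i ≤ b i) :
    ∑ i, a i • e i ≤ ∑ i, b i • e i := by
  have := hle.isOrderedRing
  rw [← sub_nonneg, ← Finset.sum_sub_distrib, hle.nonneg_iff]
  simp only [← sub_smul]
  exact .of_sum_smul (fun i => sub_nonneg.2 (hab i)) he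

theorem sum_smul_le_sum_smul_iff (hle : HasSpeckerOrder D R) (htf : SpTorsionFree D R)
    {e : ι → R} (he : OrthogonalIdempotents e) (hne : ∀ i, e i ≠ 0) {a b : ι → D} :
    ∑ i, a i • e i ≤ ∑ i, b i • e i ↔ ∀ i, a i ≤ b i := by
  have := hle.isOrderedRing
  refine ⟨fun h i => ?_, hle.sum_smul_le_sum_smul he⟩
  have hi := mul_le_mul_of_nonneg_right h (hle.nonneg_of_isIdempotentElem (he.idem i))
  rw [he.sum_smul_mul_s18, he.sum_smul_mul_s18, ← sub_nonneg, ← sub_smul] at hi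
  exact sub_nonneg.1 (hle.nonneg_of_smul_nonneg htf (he.idem i) (hne i) hi)

theorem sum_smul_eq_sum_smul_iff (hle : HasSpeckerOrder D R) (htf : SpTorsionFree D R)
    {e : ι → R} (he : OrthogonalIdempotents e) (hne : ∀ i, e i ≠ 0) {a b : ι → D} :
    ∑ i, a i • e i = ∑ i, b i • e i ↔ a = b := by
  simp only [le_antisymm_iff, hle.sum_smul_le_sum_smul_iff htf he hne, Pi.le_def]

theorem sum_smul_inf_sum_smul (hle : HasSpeckerOrder D R) {e : ι → R}
    (he : CompleteOrthogonalIdempotents e) (a b : ι → D) :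
    (∑ i, a i • e i) ⊓ (∑ i, b i • e i) = ∑ i, min (a i) (b i) • e i := by
  have := hle.isOrderedRing
  have ho := he.toOrthogonalIdempotents
  refine le_antisymm ?_ (le_inf (hle.sum_smul_le_sum_smul ho fun i => min_le_left _ _)
    (hle.sum_smul_le_sum_smul ho fun i => min_le_right _ _))
  set v := (∑ i, a i • e i) ⊓ (∑ i, b i • e i)
  have hv : v = ∑ i, v * e i := by rw [← Finset.mul_sum, he.complete, mul_one]
  rw [hv]
  refine Finset.sum_le_sum fun i _ => ?_
  have he0 := hle.nonneg_of_isIdempotentElem (he.idem i)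
  rcases min_choice (a i) (b i) with h | h <;> rw [h, ← ho.sum_smul_mul_s18]
  exacts [mul_le_mul_of_nonneg_right inf_le_left he0, mul_le_mul_of_nonneg_right inf_le_right he0]

theorem inf_eq_mul_of_isIdempotentElem (hle : HasSpeckerOrder D R) {e f : R}
    (he : IsIdempotentElem e) (hf : IsIdempotentElem f) : e ⊓ f = e * f := by
  have := hle.isOrderedRing
  have h0 {x : R} (hx : IsIdempotentElem x) := hle.nonneg_of_isIdempotentElem hx
  refine le_antisymm ?_ (le_inf ?_ ?_)
  · calc e ⊓ f = e * (e ⊓ f) + (1 - e) * (e ⊓ f) := by ring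
      _ ≤ e * f + (1 - e) * e := add_le_add (mul_le_mul_of_nonneg_left inf_le_right (h0 he))
          (mul_le_mul_of_nonneg_left inf_le_left (h0 he.one_sub))
      _ = e * f := by rw [sub_mul, one_mul, he.eq, sub_self, add_zero]
  · simpa [mul_sub] using mul_nonneg (h0 he) (h0 hf.one_sub)
  · simpa [sub_mul] using mul_nonneg (h0 he.one_sub) (h0 hf)

theorem two_smul_inf_one (hle : HasSpeckerOrder D R) {e : R} (he : IsIdempotentElem e) :
    (2 : D) • e ⊓ 1 = e := by
  simpa [Fin.sum_univ_two] using
    hle.sum_smul_inf_sum_smul (.of_isIdempotentElem he) ![2, 0] ![1, 1]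

theorem inf_smul_add_one_sub (hle : HasSpeckerOrder D R) {f : R} (hf : IsIdempotentElem f) {b : D}
    (hb : b ≤ 1) : f ⊓ (b • f + (1 - f)) = b • f := by
  simpa [Fin.sum_univ_two, hb] using
    hle.sum_smul_inf_sum_smul (.of_isIdempotentElem hf) ![1, 0] ![b, 1]

theorem isIdempotentElem_iff (hle : HasSpeckerOrder D R) (hsp : IsSpecker D R) {u : R} :
    IsIdempotentElem u ↔ (2 : D) • u ⊓ 1 = u := by
  refine ⟨hle.two_smul_inf_one, fun h => ?_⟩
  obtain ⟨ι, _, a, e, he, hne, rfl⟩ := (hsp.hasOrthDecomp u).exists_ne_zero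
  have h1 : (1 : R) = ∑ i, (1 : D) • e i := by simp [he.complete]
  rw [Finset.smul_sum, h1] at h
  simp only [smul_smul] at h
  rw [hle.sum_smul_inf_sum_smul he,
    hle.sum_smul_eq_sum_smul_iff hsp.1 he.toOrthogonalIdempotents hne] at h
  refine he.toOrthogonalIdempotents.isIdempotentElem_sum_smul fun i => ?_
  have hi : min (2 * a i) 1 = a i := congrFun h i
  rcases min_cases (2 * a i) 1 with ⟨hmin, _⟩ | ⟨hmin, _⟩ <;> rw [hmin] at hi
  · simp [show a i = 0 by linarith]
  · simp [← hi]

end HasSpeckerOrder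

end Order

theorem exists_pos_le_of_pos {ι D : Type*} [Fintype ι] [LinearOrder D] [Zero D] (a : ι → D)
    {c : D} (hc : 0 < c) : ∃ b, 0 < b ∧ b ≤ c ∧ ∀ i, 0 < a i → b ≤ a i := by
  classical
  set s := insert c ((univ.filter (0 < a ·)).image a)
  refine ⟨s.min' (insert_nonempty _ _), ?_, s.min'_le _ (mem_insert_self _ _),
    fun i hi => s.min'_le _ (mem_insert_of_mem (mem_image_of_mem a (by simpa using hi)))⟩
  obtain h | h := mem_insert.1 (s.min'_mem (insert_nonempty _ _))
  · rw [h]; exact hc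
  · obtain ⟨i, hi, hia⟩ := mem_image.1 h
    exact hia ▸ (mem_filter.1 hi).2

namespace IsProximity

variable {D R : Type*} [CommRing D] [LinearOrder D] [IsStrictOrderedRing D] [CommRing R]
  [Algebra D R] [Lattice R] {r : R → R → Prop}

theorem sup_zero_left (hr : IsProximity D R r) (hle : HasSpeckerOrder D R) {s f : R}
    (hf : 0 ≤ f) (h : r s f) : r (s ⊔ 0) f := by
  have := hle.isOrderedRing
  obtain ⟨⟨h00, -⟩, -, hmono, hinf, hneg, -⟩ := hr
  -- (P5) turns the meet on the right of (P4) into a join on the left.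
  have h0f : r (-f) 0 := by simpa using hneg _ _ (hmono 0 0 0 f le_rfl h00 hf)
  simpa [neg_inf] using hneg _ _ (hinf _ _ _ (hneg _ _ h) h0f)

theorem of_smul_left (hr : IsProximity D R r) (hle : HasSpeckerOrder D R) {e f : R}
    (he : IsIdempotentElem e) (hf : IsIdempotentElem f) {b : D} (hb0 : 0 < b) (hb1 : b ≤ 1)
    (h : r (b • e) f) : r e f := by
  have := hle.isOrderedRing
  obtain ⟨⟨-, h11⟩, -, hmono, hinf, -, -, hsmul, hunsmul, -⟩ := hr
  have he1 : r e 1 := hmono e 1 1 1 (hle.le_one_of_isIdempotentElem he) h11 le_rfl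
  have hb : b • (1 : R) ≤ b • f + (1 - f) := by
    rw [← sub_nonneg, show b • f + (1 - f) - b • 1 = (1 - b) • (1 - f) by
      rw [sub_smul, one_smul, smul_sub]; abel]
    exact hle.smul_nonneg (sub_nonneg.2 hb1) (hle.nonneg_of_isIdempotentElem hf.one_sub)
  -- `b • e ◁ f ⊓ (b • f + (1 - f)) = b • f`, and (P8) cancels the factor `b`.
  have hinf := hinf _ _ _ h (hmono _ _ _ _ le_rfl (hsmul _ _ b hb0 he1) hb)
  rw [hle.inf_smul_add_one_sub hf hb1] at hinf
  exact hunsmul e f ⟨b, hb0, hinf⟩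

/-- Writing `s ⊔ 0 = ∑ aᵢ • eᵢ`, the idempotent is the support `∑_{aᵢ > 0} eᵢ`: it dominates `s`,
and `b • (∑_{aᵢ > 0} eᵢ) ≤ s ⊔ 0` for the least positive coefficient `b`. -/
theorem exists_isIdempotentElem_le (hr : IsProximity D R r) (hle : HasSpeckerOrder D R)
    (hsp : IsSpecker D R) {s f : R} (hf : IsIdempotentElem f) (h : r s f) :
    ∃ e, IsIdempotentElem e ∧ s ≤ e ∧ r e f := by
  have := hle.isOrderedRing
  have hr_le : ∀ x y, r x y → x ≤ y := hr.2.1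
  have hr_mono : ∀ x y z w, x ≤ y → r y z → z ≤ w → r x w := hr.2.2.1
  have hs := hr.sup_zero_left hle (hle.nonneg_of_isIdempotentElem hf) h
  obtain ⟨ι, _, a, e, he, hne, hdec⟩ := (hsp.hasOrthDecomp (s ⊔ 0)).exists_ne_zero
  have ho := he.toOrthogonalIdempotents
  have ha0 : ∀ i, 0 ≤ a i := by
    refine (hle.sum_smul_le_sum_smul_iff hsp.1 ho hne).1 ?_
    simp [← hdec]
  have ha1 : ∀ i, a i ≤ 1 := by
    refine (hle.sum_smul_le_sum_smul_iff hsp.1 ho hne).1 ?_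
    simpa [← hdec, he.complete] using (hr_le _ _ hs).trans (hle.le_one_of_isIdempotentElem hf)
  set χ : ι → D := fun i => if 0 < a i then 1 else 0
  have hχ : IsIdempotentElem (∑ i, χ i • e i) :=
    ho.isIdempotentElem_sum_smul fun i => by by_cases hi : 0 < a i <;> simp [χ, hi]
  obtain ⟨b, hb0, hb1, hba⟩ := exists_pos_le_of_pos a zero_lt_one
  refine ⟨_, hχ, le_sup_left.trans (hdec.trans_le (hle.sum_smul_le_sum_smul ho fun i => ?_)), ?_⟩
  · by_cases hi : 0 < a i <;> simp [χ, hi, ha1 i, not_lt.1]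
  · refine hr.of_smul_left hle hχ hf hb0 hb1 (hr_mono _ _ _ _ ?_ hs le_rfl)
    rw [hdec, Finset.smul_sum]
    simp only [smul_smul]
    exact hle.sum_smul_le_sum_smul ho fun i => by by_cases hi : 0 < a i <;> simp [χ, hi, hba, ha0]

end IsProximity

namespace IsProxMorphism

variable {D S T : Type*} [CommRing D] [LinearOrder D] [IsStrictOrderedRing D]
  [CommRing S] [Algebra D S] [CommRing T] [Algebra D T] [Lattice S] [Lattice T]
  {rS : S → S → Prop} {rT : T → T → Prop} {α : S → T}

theorem map_one (hα : IsProxMorphism D S T rS rT α) : α 1 = 1 := by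
  obtain ⟨hzero, -, -, -, hadd, -⟩ := hα
  simpa [hzero] using hadd 0 1

theorem monotone (hα : IsProxMorphism D S T rS rT α) : Monotone α := by
  obtain ⟨-, hinf, -⟩ := hα
  intro s t h
  rw [← inf_eq_left.2 h, hinf]
  exact inf_le_right

theorem map_isIdempotentElem (hα : IsProxMorphism D S T rS rT α) (hleS : HasSpeckerOrder D S)
    (hleT : HasSpeckerOrder D T) (hT : IsSpecker D T) {e : S} (he : IsIdempotentElem e) :
    IsIdempotentElem (α e) := by
  rw [hleT.isIdempotentElem_iff hT, ← hα.map_one]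
  obtain ⟨-, hinf, -, -, -, hsmul, -⟩ := hα
  rw [← hsmul e 2 zero_le_two, ← hinf, hleS.two_smul_inf_one he]

theorem map_mul_of_isIdempotentElem (hα : IsProxMorphism D S T rS rT α)
    (hleS : HasSpeckerOrder D S) (hleT : HasSpeckerOrder D T) (hT : IsSpecker D T) {e f : S}
    (he : IsIdempotentElem e) (hf : IsIdempotentElem f) : α (e * f) = α e * α f := by
  have hαe := hα.map_isIdempotentElem hleS hleT hT he
  have hαf := hα.map_isIdempotentElem hleS hleT hT hf
  obtain ⟨-, hinf, -⟩ := hα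
  rw [← hleS.inf_eq_mul_of_isIdempotentElem he hf, hinf,
    hleT.inf_eq_mul_of_isIdempotentElem hαe hαf]

theorem rel_one_sub_map_one_sub (hα : IsProxMorphism D S T rS rT α) {s t : S} (h : rS s t) :
    rT (1 - α (1 - s)) (α t) := by
  obtain ⟨-, -, hrel, -, hadd, -⟩ := hα
  have hshift := hadd (1 - s) (-1)
  rw [map_neg, _root_.map_one, map_neg, _root_.map_one, ← sub_eq_add_neg, ← sub_eq_add_neg,
    sub_sub_cancel_left] at hshift
  simpa [hshift] using hrel s t h

theorem map_le_map_of_rel (hα : IsProxMorphism D S T rS rT α) {s t : S} (h : rS s t) :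
    α s ≤ α t := by
  obtain ⟨-, -, -, hlub, -⟩ := hα
  exact (hlub t).1 ⟨s, h, rfl⟩

theorem map_le_of_forall_isIdempotentElem (hα : IsProxMorphism D S T rS rT α)
    (hrS : IsProximity D S rS) (hleS : HasSpeckerOrder D S) (hS : IsSpecker D S) {f : S}
    (hf : IsIdempotentElem f) {u : T} (hu : ∀ e, IsIdempotentElem e → rS e f → α e ≤ u) :
    α f ≤ u := by
  have hmono := hα.monotone
  obtain ⟨-, -, -, hlub, -⟩ := hα
  refine (hlub f).2 ?_
  rintro _ ⟨s, hs, rfl⟩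
  obtain ⟨e, he, hse, hef⟩ := hrS.exists_isIdempotentElem_le hleS hS hf hs
  exact (hmono hse).trans (hu e he hef)

end IsProxMorphism

theorem statement18_general (D S T : Type*) [CommRing D] [LinearOrder D] [IsStrictOrderedRing D]
    [CommRing S] [Algebra D S] [CommRing T] [Algebra D T]
    (hS : IsSpecker D S) (hT : IsSpecker D T)
    [Lattice S] [Lattice T]
    (hleS : ∀ s t : S, s ≤ t ↔ OrthNonnegDecomp D S (t - s))
    (hleT : ∀ s t : T, s ≤ t ↔ OrthNonnegDecomp D T (t - s))
    (rS : S → S → Prop) (rT : T → T → Prop)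
    (hrS : IsProximity D S rS)
    (α : S → T) (hα : IsProxMorphism D S T rS rT α) :
    (∀ e : S, IsIdempotentElem e → IsIdempotentElem (α e)) ∧
    (α 0 = 0) ∧
    (∀ e f : S, IsIdempotentElem e → IsIdempotentElem f → α (e * f) = α e * α f) ∧
    (∀ e f : S, IsIdempotentElem e → IsIdempotentElem f → rS e f →
      rT (1 - α (1 - e)) (α f)) ∧
    (∀ f : S, IsIdempotentElem f →
      (∀ e : S, IsIdempotentElem e → rS e f → α e ≤ α f) ∧
      (∀ u : T, IsIdempotentElem u →
        (∀ e : S, IsIdempotentElem e → rS e f → α e ≤ u) → α f ≤ u)) :=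
  ⟨fun _ => hα.map_isIdempotentElem hleS hleT hT,
    hα.1,
    fun _ _ => hα.map_mul_of_isIdempotentElem hleS hleT hT,
    fun _ _ _ _ => hα.rel_one_sub_map_one_sub,
    fun f hf => ⟨fun _ _ => hα.map_le_map_of_rel,
      fun _ _ => hα.map_le_of_forall_isIdempotentElem hrS hleS hS hf⟩⟩

/-- a proximity morphism between proximity Baer-Specker `D`-algebras maps
idempotents to idempotents and restricts to a de Vries morphism on idempotents. -/
theorem statement18 (D S T : Type*) [CommRing D] [LinearOrder D] [IsStrictOrderedRing D]
    [CommRing S] [Algebra D S] [CommRing T] [Algebra D T]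
    (hS : IsSpecker D S) (hT : IsSpecker D T) (hBS : IsBaer S) (hBT : IsBaer T)
    [Lattice S] [Lattice T]
    (hleS : ∀ s t : S, s ≤ t ↔ OrthNonnegDecomp D S (t - s))
    (hleT : ∀ s t : T, s ≤ t ↔ OrthNonnegDecomp D T (t - s))
    (rS : S → S → Prop) (rT : T → T → Prop)
    (hrS : IsProximity D S rS) (hrT : IsProximity D T rT)
    (α : S → T) (hα : IsProxMorphism D S T rS rT α) :
    (∀ e : S, IsIdempotentElem e → IsIdempotentElem (α e)) ∧
    (α 0 = 0) ∧
    (∀ e f : S, IsIdempotentElem e → IsIdempotentElem f → α (e * f) = α e * α f) ∧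
    (∀ e f : S, IsIdempotentElem e → IsIdempotentElem f → rS e f →
      rT (1 - α (1 - e)) (α f)) ∧
    (∀ f : S, IsIdempotentElem f →
      (∀ e : S, IsIdempotentElem e → rS e f → α e ≤ α f) ∧
      (∀ u : T, IsIdempotentElem u →
        (∀ e : S, IsIdempotentElem e → rS e f → α e ≤ u) → α f ≤ u)) :=
  statement18_general D S T hS hT hleS hleT rS rT hrS α hα
end
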